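/- arXiv:1902.09980 — 6 statements merged into one kernel-verified Lean document; each statement's English description precedes it below -/
import Mathlib

section
/- In a single-decision causal influence diagram model, if a node X (not a descendant of the decision D) is d-separated from every utility node that descends from D by the conditioning set {D} ∪ Pa_D \ {X}, then for every parameterization there exists an optimal policy whose decision does not depend on X; hence the optimal value with the information link X→D equals the optimal value without it (no observation incentive for X). -/
/-- A directed acyclic graph on node set `V`. -/
structure DAG (V : Type) where
  E : V → V → Prop
  acyclic : ∀ v, ¬ Relation.TransGen E v v

namespace DAG

variable {V : Type}

/-- A three-node segment `a — b — c` of an undirected path is active given `Z`: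
colliders are active iff some descendant of the middle node (including itself) is in `Z`,
chains and forks are active iff the middle node is not in `Z`. -/
def ActiveTriple (G : DAG V) (Z : Set V) (a b c : V) : Prop :=
  (G.E a b ∧ G.E c b ∧ ∃ w, Relation.ReflTransGen G.E b w ∧ w ∈ Z) ∨
  (¬ (G.E a b ∧ G.E c b) ∧ b ∉ Z)

/-- An undirected path: consecutive nodes are joined by an edge in either direction. -/
def IsUPath (G : DAG V) : List V → Prop
  | [] => False
  | [_] => True
  | x :: y :: rest => (G.E x y ∨ G.E y x) ∧ IsUPath G (y :: rest)

/-- A path is active given `Z` if every three-node segment is active. -/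
def ActivePath (G : DAG V) (Z : Set V) : List V → Prop
  | x :: y :: z :: rest => ActiveTriple G Z x y z ∧ ActivePath G Z (y :: z :: rest)
  | _ => True

/-- `x` and `y` are d-connected given `Z` if some undirected path between them is active. -/
def DConn (G : DAG V) (Z : Set V) (x y : V) : Prop :=
  ∃ p : List V, p.Nodup ∧ G.IsUPath p ∧ p.head? = some x ∧ p.getLast? = some y ∧
    G.ActivePath Z p

end DAG

/-- A single-decision causal influence diagram graph: a DAG with a decision node `dec`
and a set of utility nodes `util`. -/
structure CID (V : Type) extends DAG V where
  dec : V
  util : Finset V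
  dec_not_util : dec ∉ util

/-- A directed path (allowing length 0) from `x` to `u` that avoids the node `d`. -/
def DirPathAvoiding {V : Type} (E : V → V → Prop) (x u d : V) : Prop :=
  ∃ p : List V, p ≠ [] ∧ p.head? = some x ∧ p.getLast? = some u ∧
    List.Chain' E p ∧ d ∉ p

namespace CID

variable {V : Type}

/-- The decision context: the parents (observations) of the decision node. -/
def Pa (C : CID V) : Set V := {u | C.E u C.dec}

/-- An observation `O ∈ Pa_D` is requisite if it is d-connected to a utility node
descending from the decision, conditioning on `{D} ∪ Pa_D \ {O}`. -/
def Requisite (C : CID V) (O : V) : Prop :=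
  O ∈ C.Pa ∧ ∃ u ∈ C.util, Relation.ReflTransGen C.E C.dec u ∧
    C.toDAG.DConn ({C.dec} ∪ (C.Pa \ {O})) O u

/-- A nonrequisite observation. -/
def Nonrequisite (C : CID V) (O : V) : Prop :=
  O ∈ C.Pa ∧ ¬ C.Requisite O

/-- The edge relation of the reduced graph `G*`: all nonrequisite information links
(edges into the decision from nonrequisite observations) are removed. -/
def Ered (C : CID V) : V → V → Prop :=
  fun u v => C.E u v ∧ (v = C.dec → C.Requisite u)

/-- A parameterization of a CID graph: finite domains for every node, conditional
probability distributions for every non-decision node, and a real-valued interpretation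
of the outcomes of the (utility) nodes. -/
structure Param [Fintype V] [DecidableEq V] (C : CID V) (val : V → Type)
    [∀ v, Fintype (val v)] where
  cpt : ∀ _v : V, (∀ u : V, val u) → ℝ
  cpt_nonneg : ∀ v a, 0 ≤ cpt v a
  cpt_local : ∀ v, v ≠ C.dec → ∀ a b, a v = b v → (∀ u, C.E u v → a u = b u) →
    cpt v a = cpt v b
  cpt_sum : ∀ v, v ≠ C.dec → ∀ a : ∀ u : V, val u,
    ∑ x : val v, cpt v (Function.update a v x) = 1
  uval : ∀ v : V, val v → ℝ

/-- A policy whose decision may depend (only) on the observations in `Obs`: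
a conditional distribution for the decision given the values of the nodes in `Obs`. -/
structure Pol [Fintype V] [DecidableEq V] (C : CID V) (val : V → Type)
    [∀ v, Fintype (val v)] (Obs : Set V) where
  p : (∀ v : V, val v) → ℝ
  nonneg : ∀ a, 0 ≤ p a
  depends : ∀ a b, a C.dec = b C.dec → (∀ u ∈ Obs, a u = b u) → p a = p b
  sum : ∀ a : ∀ v : V, val v, ∑ d : val C.dec, p (Function.update a C.dec d) = 1

/-- The value (expected sum of utilities) of a decision rule `p` under a
parameterization `P`. -/
noncomputable def value [Fintype V] [DecidableEq V] (C : CID V) {val : V → Type}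
    [∀ v, Fintype (val v)] (P : C.Param val) (p : (∀ v : V, val v) → ℝ) : ℝ :=
  ∑ a : ∀ v : V, val v,
    (p a * ∏ v ∈ Finset.univ.erase C.dec, P.cpt v a) * ∑ u ∈ C.util, P.uval u (a u)

end CID

/-! Utilities that do not descend from `D` have an expectation no decision rule can change, so
only the utilities `U₁` downstream of `D` matter. Put `Z = {D} ∪ Pa_D \ {X}`, let `A` be the
ancestral set of `{X} ∪ Z ∪ U₁` and `R` the component of `X` in the moral graph of `A` with `Z`
deleted. A Bayes-ball argument turns any moral path from `X` to a node with a `Z`-free directed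
path into `U₁` into a d-connecting path, so the d-separation hypothesis keeps `R` away from `U₁`
and from the children of `D`. After summing out the nodes outside `A`, the kernels of `A` split
into those whose family meets `R`, a factor depending neither on `D` nor on the nodes of
`A \ (Z ∪ R)`, and the others, which together with `U₁` only read `A \ R`. Summing out
`A \ (Z ∪ R)` then writes the expected utility as a nonnegatively weighted sum of a function `β`
of `Z` alone, and the rule choosing `D` to maximize `β` is optimal without looking at `X`. -/

namespace List

theorem exists_eq_append_cons_append_cons_of_not_nodup {α : Type*} {l : List α}
    (h : ¬ l.Nodup) : ∃ l₁ v l₂ l₃, l = l₁ ++ v :: l₂ ++ v :: l₃ := by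
  induction l with
  | nil => exact absurd List.nodup_nil h
  | cons x l ih =>
    by_cases hx : x ∈ l
    · obtain ⟨s, t, rfl⟩ := List.append_of_mem hx
      exact ⟨[], x, s, t, rfl⟩
    · obtain ⟨l₁, v, l₂, l₃, rfl⟩ := ih fun hl => h (List.nodup_cons.mpr ⟨hx, hl⟩)
      exact ⟨x :: l₁, v, l₂, l₃, rfl⟩

end List

namespace DAG

variable {V : Type} (G : DAG V)

theorem not_edge_self (v : V) : ¬ G.E v v :=
  fun h => G.acyclic v (.single h)

theorem not_edge_of_edge {u v : V} (h : G.E u v) : ¬ G.E v u :=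
  fun h' => G.acyclic u (.tail (.single h) h')

theorem eq_of_reflTransGen_of_reflTransGen {u v : V} (huv : Relation.ReflTransGen G.E u v)
    (hvu : Relation.ReflTransGen G.E v u) : u = v := by
  rcases Relation.reflTransGen_iff_eq_or_transGen.1 huv with h | h
  · exact h.symm
  · exact absurd (h.trans_left hvu) (G.acyclic u)

theorem exists_mem_forall_not_edge [Finite V] {T : Finset V} (hT : T.Nonempty) :
    ∃ v ∈ T, ∀ w ∈ T, ¬ G.E w v := by
  have : Std.Irrefl (Relation.TransGen G.E) := ⟨G.acyclic⟩
  obtain ⟨v, hv, hmin⟩ :=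
    (Finite.wellFounded_of_trans_of_irrefl (Relation.TransGen G.E)).has_min T hT
  exact ⟨v, hv, fun w hw h => hmin w hw (.single h)⟩

/-- Bayes-ball reachability from `x` given `Z`; the flag records whether the node was entered
through an edge pointing into it. -/
inductive DReach (Z : Set V) (x : V) : V → Bool → Prop
  | start : DReach Z x x false
  | toChild {v w : V} {d : Bool} : DReach Z x v d → v ∉ Z → G.E v w → DReach Z x w true
  | toParent {v w : V} : DReach Z x v false → v ∉ Z → G.E w v → DReach Z x w false
  | bounce {v w : V} : DReach Z x v true → (∃ z, Relation.ReflTransGen G.E v z ∧ z ∈ Z) →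
      G.E w v → DReach Z x w false

def ancestors (S : Set V) : Set V := {v | ∃ s ∈ S, Relation.ReflTransGen G.E v s}

def MoralAdj (A Z : Set V) (u w : V) : Prop :=
  u ∈ A \ Z ∧ w ∈ A \ Z ∧ (G.E u w ∨ G.E w u ∨ ∃ c ∈ A, G.E u c ∧ G.E w c)

variable {G} {Z : Set V}

theorem isUPath_append_cons {l₁ l₂ : List V} {v : V} :
    G.IsUPath (l₁ ++ v :: l₂) ↔ G.IsUPath (l₁ ++ [v]) ∧ G.IsUPath (v :: l₂) := by
  induction l₁ with
  | nil => simp [IsUPath]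
  | cons x l₁ ih =>
    cases l₁ with
    | nil => simp [IsUPath]
    | cons y l₁ =>
      simp only [List.cons_append] at ih ⊢
      simp only [IsUPath, ih, and_assoc]

theorem activePath_append_cons {l₁ l₂ : List V} {v : V} :
    G.ActivePath Z (l₁ ++ v :: l₂) ↔ G.ActivePath Z (l₁ ++ [v]) ∧ G.ActivePath Z (v :: l₂) ∧
      ∀ a ∈ l₁.getLast?, ∀ c ∈ l₂.head?, G.ActiveTriple Z a v c := by
  induction l₁ with
  | nil => simp [ActivePath]
  | cons x l₁ ih =>
    rcases l₁ with _ | ⟨y, _ | ⟨y', l₁⟩⟩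
    · cases l₂ <;> simp [ActivePath, and_comm]
    · cases l₂ <;> simp [ActivePath, and_comm]
    · simp only [List.cons_append] at ih ⊢
      simp only [ActivePath, ih, List.getLast?_cons_cons, and_assoc]

theorem isChain_or_exists_desc_mem {x y : V} {t : List V} (hp : G.IsUPath (x :: y :: t))
    (ha : G.ActivePath Z (x :: y :: t)) (hxy : G.E x y) :
    List.IsChain G.E (x :: y :: t) ∨ ∃ w, Relation.ReflTransGen G.E x w ∧ w ∈ Z := by
  induction t generalizing x y with
  | nil => exact .inl (.cons_cons hxy (.singleton y))
  | cons z t ih =>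
    rcases hp.2.1 with hyz | hzy
    · refine (ih hp.2 (activePath_append_cons (l₁ := [x]).1 ha).2.1 hyz).imp
        (.cons_cons hxy) fun ⟨w, hyw, hw⟩ => ⟨w, .head hxy hyw, hw⟩
    · rcases ha.1 with ⟨-, -, w, hyw, hw⟩ | ⟨hnc, -⟩
      · exact .inr ⟨w, .head hxy hyw, hw⟩
      · exact absurd ⟨hxy, hzy⟩ hnc

theorem activePath_splice {l₁ l₂ l₃ : List V} {v : V}
    (hp : G.IsUPath (l₁ ++ v :: l₂ ++ v :: l₃)) (ha : G.ActivePath Z (l₁ ++ v :: l₂ ++ v :: l₃)) :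
    G.IsUPath (l₁ ++ v :: l₃) ∧ G.ActivePath Z (l₁ ++ v :: l₃) := by
  simp only [List.append_assoc, List.cons_append] at hp ha
  obtain ⟨hp₁, hp₂⟩ := isUPath_append_cons.1 hp
  obtain ⟨ha₁, ha₂, hseam₁⟩ := activePath_append_cons.1 ha
  rw [← List.cons_append] at hp₂ ha₂
  obtain ⟨hloop, hp₃⟩ := isUPath_append_cons.1 hp₂
  obtain ⟨hloopa, ha₃, hseam₂⟩ := activePath_append_cons.1 ha₂
  refine ⟨isUPath_append_cons.2 ⟨hp₁, hp₃⟩, activePath_append_cons.2 ⟨ha₁, ha₃, ?_⟩⟩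
  intro a hal c hc
  obtain _ | ⟨w, l₂⟩ := l₂
  · exact absurd hloop.1 (by simp [not_edge_self])
  have t₁ := hseam₁ a hal w rfl
  have t₂ := hseam₂ _ (List.getLast?_eq_some_getLast (l := v :: w :: l₂) (by simp)) c hc
  by_cases hcol : G.E a v ∧ G.E c v
  · refine .inl ⟨hcol.1, hcol.2, ?_⟩
    -- a loop leaving `v` along an out-edge must turn back at a collider below `v`
    rcases hloop.1 with hvw | hwv
    · refine (isChain_or_exists_desc_mem hloop hloopa hvw).resolve_left fun hch => ?_
      have hwv := List.relationReflTransGen_of_exists_isChain_cons (a := w) (b := v) (l₂ ++ [v])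
        hch.tail (by simp)
      exact G.acyclic v (.head' hvw hwv)
    · rcases t₁ with ⟨-, -, hdesc⟩ | ⟨hnc, -⟩
      · exact hdesc
      · exact absurd ⟨hcol.1, hwv⟩ hnc
  · refine .inr ⟨hcol, fun hvZ => hcol ⟨?_, ?_⟩⟩
    · rcases t₁ with ⟨hav, -⟩ | ⟨-, hvZ'⟩
      · exact hav
      · exact absurd hvZ hvZ'
    · rcases t₂ with ⟨-, hcv, -⟩ | ⟨-, hvZ'⟩
      · exact hcv
      · exact absurd hvZ hvZ'

theorem dConn_of_activePath {x y : V} {l : List V} (hp : G.IsUPath l) (ha : G.ActivePath Z l)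
    (hx : l.head? = some x) (hy : l.getLast? = some y) : G.DConn Z x y := by
  induction hn : l.length using Nat.strong_induction_on generalizing l with
  | _ n ih =>
    by_cases hnd : l.Nodup
    · exact ⟨l, hnd, hp, hx, hy, ha⟩
    obtain ⟨l₁, v, l₂, l₃, rfl⟩ := List.exists_eq_append_cons_append_cons_of_not_nodup hnd
    obtain ⟨hp', ha'⟩ := activePath_splice hp ha
    refine ih _ ?_ hp' ha' ?_ ?_ rfl
    · subst hn; simp
    · cases l₁ <;> simpa using hx
    · rw [List.getLast?_append, List.getLast?_cons] at hy ⊢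
      simpa using hy

theorem activePath_snoc {l : List V} {v w : V} (hp : G.IsUPath (l ++ [v]))
    (ha : G.ActivePath Z (l ++ [v])) (hvw : G.E v w ∨ G.E w v)
    (ht : ∀ p ∈ l.getLast?, G.ActiveTriple Z p v w) :
    G.IsUPath (l ++ [v] ++ [w]) ∧ G.ActivePath Z (l ++ [v] ++ [w]) := by
  simp only [List.append_assoc, List.cons_append, List.nil_append]
  exact ⟨isUPath_append_cons.2 ⟨hp, hvw, trivial⟩,
    activePath_append_cons.2 ⟨ha, trivial, fun p hp c hc => by cases hc; exact ht p hp⟩⟩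

variable {x : V}

theorem DReach.exists_activePath {v : V} {d : Bool} (h : G.DReach Z x v d) :
    ∃ l, G.IsUPath (l ++ [v]) ∧ G.ActivePath Z (l ++ [v]) ∧ (l ++ [v]).head? = some x ∧
      ∀ p ∈ l.getLast?, (G.E p v ↔ d = true) := by
  induction h with
  | start => exact ⟨[], trivial, trivial, rfl, by simp⟩
  | @toChild v w d _ hvZ hvw ih =>
    obtain ⟨l, hp, ha, hx, -⟩ := ih
    obtain ⟨hp', ha'⟩ := activePath_snoc hp ha (.inl hvw) fun p _ =>
      .inr ⟨fun h => G.not_edge_of_edge hvw h.2, hvZ⟩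
    exact ⟨l ++ [v], hp', ha', by simpa using hx, by simp [hvw]⟩
  | @toParent v w _ hvZ hwv ih =>
    obtain ⟨l, hp, ha, hx, hdir⟩ := ih
    obtain ⟨hp', ha'⟩ := activePath_snoc hp ha (.inr hwv) fun p hpl =>
      .inr ⟨fun h => by simpa using (hdir p hpl).1 h.1, hvZ⟩
    exact ⟨l ++ [v], hp', ha', by simpa using hx, by simp [G.not_edge_of_edge hwv]⟩
  | @bounce v w _ hdesc hwv ih =>
    obtain ⟨l, hp, ha, hx, hdir⟩ := ih
    obtain ⟨hp', ha'⟩ := activePath_snoc hp ha (.inr hwv) fun p hpl =>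
      .inl ⟨(hdir p hpl).2 rfl, hwv, hdesc⟩
    exact ⟨l ++ [v], hp', ha', by simpa using hx, by simp [G.not_edge_of_edge hwv]⟩

theorem DReach.dConn {v : V} {d : Bool} (h : G.DReach Z x v d) : G.DConn Z x v := by
  obtain ⟨l, hp, ha, hx, -⟩ := h.exists_activePath
  exact dConn_of_activePath hp ha hx (by simp)

theorem DReach.of_reflTransGen {v u : V} {d : Bool} (h : G.DReach Z x v d)
    (hvu : Relation.ReflTransGen G.E v u)
    (hZ : ∀ z, Relation.ReflTransGen G.E v z → Relation.ReflTransGen G.E z u → z ∉ Z) :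
    ∃ d', G.DReach Z x u d' := by
  induction hvu using Relation.ReflTransGen.head_induction_on generalizing d with
  | refl => exact ⟨d, h⟩
  | head hvw _ ih =>
    exact ih (h.toChild (hZ _ .refl (.head hvw ‹_›)) hvw) fun z hwz hzu => hZ z (.head hvw hwz) hzu

theorem dReach_of_reflTransGen {v : V} (hvx : Relation.ReflTransGen G.E v x)
    (hZ : ∀ z, Relation.ReflTransGen G.E v z → z ∉ Z) : G.DReach Z x v false := by
  induction hvx using Relation.ReflTransGen.head_induction_on with
  | refl => exact .start
  | head hvw _ ih =>
    exact (ih fun z hwz => hZ z (.head hvw hwz)).toParent (hZ _ (.single hvw)) hvw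

variable {U : Set V}

/-- A collider in the ancestral set of `{x} ∪ Z ∪ U` either lets the ball bounce, or has a
`Z`-free directed path to `x` (giving another route to the collider) or into `U`. -/
theorem DReach.exists_mem_or_parent {m c : V} (h : G.DReach Z x m true)
    (hm : m ∈ G.ancestors (insert x (Z ∪ U))) (hcm : G.E c m) :
    (∃ u ∈ U, ∃ d, G.DReach Z x u d) ∨ G.DReach Z x c false := by
  by_cases hdesc : ∃ z, Relation.ReflTransGen G.E m z ∧ z ∈ Z
  · exact .inr (h.bounce hdesc hcm)
  push Not at hdesc
  obtain ⟨s, hs, hms⟩ := hm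
  rcases hs with rfl | hsZ | hsU
  · exact .inr ((dReach_of_reflTransGen hms hdesc).toParent (hdesc m .refl) hcm)
  · exact absurd hsZ (hdesc s hms)
  · exact .inl ⟨s, hsU, h.of_reflTransGen hms fun z hmz _ => hdesc z hmz⟩

theorem reach_of_moralAdj {w : V}
    (hw : Relation.ReflTransGen (G.MoralAdj (G.ancestors (insert x (Z ∪ U))) Z) x w) :
    (∃ u ∈ U, ∃ d, G.DReach Z x u d) ∨ ∃ d, G.DReach Z x w d := by
  induction hw with
  | refl => exact .inr ⟨false, .start⟩
  | tail _ hwc ih =>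
    obtain ⟨⟨hwA, hwZ⟩, -, hedge⟩ := hwc
    refine ih.elim .inl fun ⟨d, hd⟩ => ?_
    rcases hedge with hwc | hcw | ⟨m, hmA, hwm, hcm⟩
    · exact .inr ⟨true, hd.toChild hwZ hwc⟩
    · cases d
      · exact .inr ⟨false, hd.toParent hwZ hcw⟩
      · exact (hd.exists_mem_or_parent hwA hcw).imp_right (⟨false, ·⟩)
    · exact ((hd.toChild hwZ hwm).exists_mem_or_parent hmA hcm).imp_right (⟨false, ·⟩)

theorem exists_dConn_of_moralAdj {w u : V}
    (hw : Relation.ReflTransGen (G.MoralAdj (G.ancestors (insert x (Z ∪ U))) Z) x w)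
    (hu : u ∈ U) (hwu : Relation.ReflTransGen G.E w u)
    (hZ : ∀ z, Relation.ReflTransGen G.E w z → Relation.ReflTransGen G.E z u → z ∉ Z) :
    ∃ u ∈ U, G.DConn Z x u := by
  rcases reach_of_moralAdj hw with ⟨u', hu', d, h⟩ | ⟨d, h⟩
  · exact ⟨u', hu', h.dConn⟩
  · obtain ⟨d', h'⟩ := h.of_reflTransGen hwu hZ
    exact ⟨u, hu, h'.dConn⟩

end DAG

section Marginal

open Function

variable {V : Type} {val : V → Type}

theorem DependsOn.mul {f g : (∀ v, val v) → ℝ} {s : Set V} (hf : DependsOn f s)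
    (hg : DependsOn g s) : DependsOn (fun a => f a * g a) s :=
  fun _ _ h => congr_arg₂ (· * ·) (hf h) (hg h)

theorem DependsOn.finset_prod {ι : Type} {t : Finset ι} {f : ι → (∀ v, val v) → ℝ} {s : Set V}
    (hf : ∀ i ∈ t, DependsOn (f i) s) : DependsOn (fun a => ∏ i ∈ t, f i a) s :=
  fun _ _ h => Finset.prod_congr rfl fun i hi => hf i hi h

variable [DecidableEq V]

theorem DependsOn.apply_update_of_notMem {f : (∀ v, val v) → ℝ} {s : Set V} (hf : DependsOn f s)
    {v : V} (hv : v ∉ s) (a : ∀ v, val v) (x : val v) : f (Function.update a v x) = f a :=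
  hf fun _ hu => update_of_ne (ne_of_mem_of_not_mem hu hv) _ _

variable [∀ v, Fintype (val v)]

def sumOut (v : V) (f : (∀ v, val v) → ℝ) (a : ∀ v, val v) : ℝ :=
  ∑ x : val v, f (update a v x)

def sumOutList (l : List V) (f : (∀ v, val v) → ℝ) : (∀ v, val v) → ℝ :=
  l.foldr sumOut f

theorem DependsOn.sumOut {f : (∀ v, val v) → ℝ} {s : Set V} (hf : DependsOn f s) (v : V) :
    DependsOn (sumOut v f) (s \ {v}) := by
  intro a b hab
  refine Finset.sum_congr rfl fun x _ => hf fun u hu => ?_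
  by_cases huv : u = v
  · subst huv; simp
  · simp only [update_of_ne huv]
    exact hab u ⟨hu, huv⟩

theorem DependsOn.sumOutList {f : (∀ v, val v) → ℝ} {s : Set V} (hf : DependsOn f s)
    (l : List V) : DependsOn (sumOutList l f) (s \ {v | v ∈ l}) := by
  induction l with
  | nil => simpa [_root_.sumOutList] using hf
  | cons v l ih =>
    refine (ih.sumOut v).mono ?_
    rintro u ⟨⟨hus, hul⟩, huv⟩
    exact ⟨hus, fun h => (List.mem_cons.1 h).elim huv hul⟩

theorem sumOut_mul_left {f g : (∀ v, val v) → ℝ} {s : Set V} (hg : DependsOn g s) {v : V}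
    (hv : v ∉ s) (a : ∀ v, val v) :
    sumOut v (fun b => g b * f b) a = g a * sumOut v f a := by
  simp only [sumOut, Finset.mul_sum, hg.apply_update_of_notMem hv]

variable [Fintype V]

theorem sum_sumOut (v : V) (f : (∀ v, val v) → ℝ) :
    ∑ a, sumOut v f a = Fintype.card (val v) * ∑ a, f a := by
  let e := (Equiv.piSplitAt v val).symm
  have he : ∀ y r x, update (e (y, r)) v x = e (x, r) := fun y r x => by
    ext j
    by_cases hj : j = v
    · subst hj; simp [e, Equiv.piSplitAt_symm_apply]
    · simp [e, hj, Equiv.piSplitAt_symm_apply]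
  rw [← e.sum_comp, ← e.sum_comp, Fintype.sum_prod_type, Fintype.sum_prod_type]
  simp only [sumOut, he, Finset.sum_const, Finset.card_univ, nsmul_eq_mul]
  rw [Finset.sum_comm]

theorem sum_le_sum_of_sumOut_le {v : V} [Nonempty (val v)] {f g : (∀ v, val v) → ℝ}
    (h : ∀ a, sumOut v f a ≤ sumOut v g a) : ∑ a, f a ≤ ∑ a, g a := by
  have := Finset.sum_le_sum fun a (_ : a ∈ Finset.univ) => h a
  rw [sum_sumOut, sum_sumOut] at this
  exact le_of_mul_le_mul_left this (by exact_mod_cast Fintype.card_pos)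

theorem sum_mul_sumOutList {f g : (∀ v, val v) → ℝ} {s : Set V} (hg : DependsOn g s)
    {l : List V} (hl : ∀ v ∈ l, v ∉ s) :
    ∑ a, g a * sumOutList l f a = (l.map fun v => (Fintype.card (val v) : ℝ)).prod *
      ∑ a, g a * f a := by
  induction l with
  | nil => simp [sumOutList]
  | cons v l ih =>
    simp only [sumOutList, List.foldr_cons] at ih ⊢
    simp_rw [← sumOut_mul_left hg (hl v (.head l)), sum_sumOut,
      ih fun u hu => hl u (.tail v hu), List.map_cons, List.prod_cons, mul_assoc]

theorem card_mul_sum_mul_eq_sum {g k : (∀ v, val v) → ℝ} {s : Set V} (hg : DependsOn g s)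
    {v : V} (hv : v ∉ s) (hk : ∀ a, ∑ x, k (update a v x) = 1) :
    Fintype.card (val v) * ∑ a, g a * k a = ∑ a, g a := by
  rw [← sum_sumOut]
  exact Finset.sum_congr rfl fun a _ => by rw [sumOut_mul_left hg hv, sumOut, hk, mul_one]

end Marginal

theorem DAG.prod_card_mul_sum_prod_mul {V : Type} [Fintype V] [DecidableEq V] {val : V → Type}
    [∀ v, Fintype (val v)] (G : DAG V) {k : V → (∀ v, val v) → ℝ} {S : V → Set V}
    {h : (∀ v, val v) → ℝ} {T : Finset V} (hk : ∀ u, DependsOn (k u) (insert u (S u)))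
    (hS : ∀ u, ∀ w ∈ T, w ∈ S u → G.E w u) (hT : ∀ v ∈ T, ∀ u, G.E v u → u ∈ T)
    (hnorm : ∀ v ∈ T, ∀ a, ∑ x, k v (Function.update a v x) = 1) (hh : DependsOn h (↑T)ᶜ) :
    (∏ v ∈ T, (Fintype.card (val v) : ℝ)) * ∑ a, (∏ u, k u a) * h a =
      ∑ a, (∏ u ∈ Tᶜ, k u a) * h a := by
  induction T using Finset.strongInduction with
  | _ T ih =>
    rcases T.eq_empty_or_nonempty with rfl | hne
    · simp
    -- sum out `T \ {v}` for a source `v` of `T` first, then `v`, whose kernel integrates to one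
    obtain ⟨v, hvT, hsrc⟩ := G.exists_mem_forall_not_edge hne
    have hT' : ∀ w ∈ T.erase v, ∀ u, G.E w u → u ∈ T.erase v := fun w hw u hwu =>
      Finset.mem_erase.2 ⟨fun huv => hsrc w (Finset.mem_of_mem_erase hw) (huv ▸ hwu),
        hT w (Finset.mem_of_mem_erase hw) u hwu⟩
    have hg : DependsOn (fun a => (∏ u ∈ Tᶜ, k u a) * h a) {v}ᶜ := by
      refine .mul (.finset_prod fun u hu => (hk u).mono ?_) (hh.mono (by simpa using hvT))
      rintro w (rfl | hw) rfl
      · exact Finset.mem_compl.1 hu hvT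
      · exact Finset.mem_compl.1 hu (hT w hvT u (hS u w hvT hw))
    rw [← Finset.mul_prod_erase T _ hvT, mul_assoc,
      ih _ (Finset.erase_ssubset hvT) (fun u w hw => hS u w (Finset.mem_of_mem_erase hw)) hT'
        (fun w hw => hnorm w (Finset.mem_of_mem_erase hw))
        (hh.mono (Set.compl_subset_compl.2 (by simp))),
      ← card_mul_sum_mul_eq_sum hg (by simp) (hnorm v hvT)]
    simp only [Finset.compl_erase, Finset.prod_insert (Finset.notMem_compl.2 hvT)]
    congr 1
    exact Finset.sum_congr rfl fun a _ => by ring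

namespace CID

open Function

variable {V : Type}

section Graph

def inputs [DecidableEq V] (C : CID V) (Obs : Set V) (u : V) : Set V :=
  if u = C.dec then Obs else {w | C.E w u}

variable (C : CID V) (X : V)

def family (v : V) : Set V := insert v {u | C.E u v}

def sepSet : Set V := {C.dec} ∪ (C.Pa \ {X})

def descUtil : Set V := {u | u ∈ C.util ∧ Relation.ReflTransGen C.E C.dec u}

def ancestralSet : Set V := C.ancestors (insert X (C.sepSet X ∪ C.descUtil))

def moralComp : Set V :=
  {w | Relation.ReflTransGen (C.MoralAdj (C.ancestralSet X) (C.sepSet X)) X w}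

open Classical in
noncomputable def descUtilFinset : Finset V :=
  C.util.filter fun u => Relation.ReflTransGen C.E C.dec u

variable {C X}

theorem mem_descUtilFinset {u : V} : u ∈ C.descUtilFinset ↔ u ∈ C.descUtil := by
  simp [descUtilFinset, descUtil]

theorem mem_ancestralSet_of_edge {u v : V} (hv : v ∈ C.ancestralSet X) (huv : C.E u v) :
    u ∈ C.ancestralSet X :=
  let ⟨s, hs, hvs⟩ := hv
  ⟨s, hs, .head huv hvs⟩

theorem moralComp_subset (hX : X ≠ C.dec) {w : V} (hw : w ∈ C.moralComp X) :
    w ∈ C.ancestralSet X \ C.sepSet X := by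
  induction hw with
  | refl => exact ⟨⟨X, .inl rfl, .refl⟩, by rintro (h | ⟨-, h⟩); exacts [hX h, h rfl]⟩
  | tail _ hvw _ => exact hvw.2.1

theorem mem_moralComp_of_adj (hX : X ≠ C.dec) {w v : V} (hw : w ∈ C.moralComp X)
    (hv : v ∈ C.ancestralSet X \ C.sepSet X)
    (h : C.E w v ∨ C.E v w ∨ ∃ c ∈ C.ancestralSet X, C.E w c ∧ C.E v c) : v ∈ C.moralComp X :=
  .tail hw ⟨moralComp_subset hX hw, hv, h⟩

theorem mem_moralComp_of_family (hX : X ≠ C.dec) {v : V} (hv : v ∈ C.ancestralSet X \ C.sepSet X)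
    (hfam : (C.family v ∩ C.moralComp X).Nonempty) : v ∈ C.moralComp X := by
  obtain ⟨w, rfl | hwv, hw⟩ := hfam
  exacts [hw, mem_moralComp_of_adj hX hw hv (.inl hwv)]

theorem mem_moralComp_of_mem_family (hX : X ≠ C.dec) {u v : V} (hu : u ∈ C.ancestralSet X)
    (hfam : (C.family u ∩ C.moralComp X).Nonempty) (hvu : v ∈ C.family u)
    (hv : v ∈ C.ancestralSet X \ C.sepSet X) : v ∈ C.moralComp X := by
  obtain rfl | hvu := hvu
  · exact mem_moralComp_of_family hX hv hfam
  obtain ⟨w, rfl | hwu, hw⟩ := hfam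
  · exact mem_moralComp_of_adj hX hw hv (.inr (.inl hvu))
  · exact mem_moralComp_of_adj hX hw hv (.inr (.inr ⟨u, hu, hwu, hvu⟩))

theorem descUtil_notMem_moralComp (hX : X ≠ C.dec)
    (hsep : ∀ u ∈ C.util, Relation.ReflTransGen C.E C.dec u →
      ¬ C.toDAG.DConn ({C.dec} ∪ (C.Pa \ {X})) X u)
    {u : V} (hu : u ∈ C.descUtil) : u ∉ C.moralComp X := fun huR => by
  obtain ⟨u', hu', hconn⟩ := C.exists_dConn_of_moralAdj huR hu .refl fun z huz hzu =>
    C.eq_of_reflTransGen_of_reflTransGen huz hzu ▸ (moralComp_subset hX huR).2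
  exact hsep u' hu'.1 hu'.2 hconn

theorem notMem_sepSet_of_dec_edge {c z : V} (hc : C.E C.dec c)
    (hcz : Relation.ReflTransGen C.E c z) : z ∉ C.sepSet X := by
  rintro (rfl | ⟨hz, -⟩)
  · exact C.acyclic _ (.head' hc hcz)
  · exact C.acyclic _ (.tail' (.head hc hcz) hz)

theorem notMem_sepSet_of_edge_dec {u : V} (hu : u ≠ C.dec) (hDu : C.E C.dec u) :
    u ∉ C.sepSet X := by
  rintro (rfl | ⟨huD, -⟩)
  exacts [hu rfl, C.not_edge_of_edge hDu huD]

theorem dec_edge_notMem_moralComp (hX : X ≠ C.dec) (hXdesc : ¬ Relation.TransGen C.E C.dec X)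
    (hsep : ∀ u ∈ C.util, Relation.ReflTransGen C.E C.dec u →
      ¬ C.toDAG.DConn ({C.dec} ∪ (C.Pa \ {X})) X u)
    {c : V} (hc : C.E C.dec c) : c ∉ C.moralComp X := fun hcR => by
  obtain ⟨s, hs, hcs⟩ := (moralComp_subset hX hcR).1
  rcases hs with rfl | hsZ | hsU
  · exact hXdesc (.head' hc hcs)
  · exact notMem_sepSet_of_dec_edge hc hcs hsZ
  · obtain ⟨u', hu', hconn⟩ := C.exists_dConn_of_moralAdj hcR hsU hcs fun z hcz _ =>
      notMem_sepSet_of_dec_edge hc hcz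
    exact hsep u' hu'.1 hu'.2 hconn

end Graph

section Finsets

variable [Fintype V] (C : CID V) (X : V)

open Classical in
noncomputable def decDescendants : Finset V :=
  Finset.univ.filter fun v => Relation.ReflTransGen C.E C.dec v

open Classical in
noncomputable def ancestralFinset : Finset V := Finset.univ.filter (· ∈ C.ancestralSet X)

open Classical in
noncomputable def hiddenFinset : Finset V :=
  Finset.univ.filter fun v => v ∈ C.ancestralSet X \ C.sepSet X ∧ v ∉ C.moralComp X

variable {C X}

theorem mem_decDescendants {v : V} :
    v ∈ C.decDescendants ↔ Relation.ReflTransGen C.E C.dec v := by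
  simp [decDescendants]

theorem mem_ancestralFinset {v : V} : v ∈ ancestralFinset C X ↔ v ∈ C.ancestralSet X := by
  simp [ancestralFinset]

theorem mem_hiddenFinset {v : V} : v ∈ hiddenFinset C X ↔
    v ∈ C.ancestralSet X \ C.sepSet X ∧ v ∉ C.moralComp X := by
  simp [hiddenFinset]

variable [DecidableEq V] (C X)

open Classical in
noncomputable def nearFinset : Finset V :=
  ((ancestralFinset C X).erase C.dec).filter fun v => (C.family v ∩ C.moralComp X).Nonempty

open Classical in
noncomputable def farFinset : Finset V :=
  ((ancestralFinset C X).erase C.dec).filter fun v => ¬ (C.family v ∩ C.moralComp X).Nonempty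

variable {C X}

theorem mem_nearFinset {v : V} : v ∈ nearFinset C X ↔
    v ≠ C.dec ∧ v ∈ C.ancestralSet X ∧ (C.family v ∩ C.moralComp X).Nonempty := by
  simp [nearFinset, ancestralFinset, and_assoc]

theorem mem_farFinset {v : V} : v ∈ farFinset C X ↔
    v ≠ C.dec ∧ v ∈ C.ancestralSet X ∧ ¬ (C.family v ∩ C.moralComp X).Nonempty := by
  simp [farFinset, ancestralFinset, and_assoc]

end Finsets

section Kernels

variable [Fintype V] [DecidableEq V] {C : CID V} {val : V → Type} [∀ v, Fintype (val v)]

theorem Param.dependsOn_cpt (P : C.Param val) {v : V} (hv : v ≠ C.dec) :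
    DependsOn (P.cpt v) (C.family v) :=
  fun _ _ h => P.cpt_local v hv _ _ (h v (.inl rfl)) fun u hu => h u (.inr hu)

theorem Pol.dependsOn {Obs : Set V} (π : C.Pol val Obs) : DependsOn π.p (insert C.dec Obs) :=
  fun _ _ h => π.depends _ _ (h _ (.inl rfl)) fun u hu => h u (.inr hu)

theorem dependsOn_sum_uval (P : C.Param val) (S : Finset V) :
    DependsOn (fun a => ∑ u ∈ S, P.uval u (a u)) S :=
  fun _ _ h => Finset.sum_congr rfl fun u hu => by rw [h u hu]

def kernel (P : C.Param val) (p : (∀ v, val v) → ℝ) (u : V) : (∀ v, val v) → ℝ :=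
  if u = C.dec then p else P.cpt u

theorem kernel_of_ne (P : C.Param val) (p : (∀ v, val v) → ℝ) {u : V} (hu : u ≠ C.dec) :
    C.kernel P p u = P.cpt u := if_neg hu

theorem prod_kernel (P : C.Param val) (p : (∀ v, val v) → ℝ) (a : ∀ v, val v) :
    ∏ u, C.kernel P p u a = p a * ∏ u ∈ Finset.univ.erase C.dec, P.cpt u a := by
  rw [← Finset.mul_prod_erase _ _ (Finset.mem_univ C.dec)]
  congr 1
  · simp [kernel]
  · exact Finset.prod_congr rfl fun u hu => by rw [kernel_of_ne P p (Finset.ne_of_mem_erase hu)]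

theorem value_eq_sum_prod_kernel (P : C.Param val) (p : (∀ v, val v) → ℝ) :
    C.value P p = ∑ a, (∏ u, C.kernel P p u a) * ∑ u ∈ C.util, P.uval u (a u) := by
  simp only [value, prod_kernel]

theorem dependsOn_kernel (P : C.Param val) {Obs : Set V} {p : (∀ v, val v) → ℝ}
    (hp : DependsOn p (insert C.dec Obs)) (u : V) :
    DependsOn (C.kernel P p u) (insert u (C.inputs Obs u)) := by
  by_cases hu : u = C.dec
  · subst hu; simpa [kernel, inputs] using hp
  · simpa [kernel, inputs, family, hu] using P.dependsOn_cpt hu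

theorem sum_kernel_update (P : C.Param val) {p : (∀ v, val v) → ℝ}
    (hpn : ∀ a, ∑ d, p (update a C.dec d) = 1) (v : V) (a : ∀ v, val v) :
    ∑ x, C.kernel P p v (update a v x) = 1 := by
  by_cases hv : v = C.dec
  · subst hv; simpa [kernel] using hpn a
  · simpa [kernel, hv] using P.cpt_sum v hv a

theorem prod_card_mul_sum_prod_kernel_mul (P : C.Param val) {Obs : Set V}
    {p : (∀ v, val v) → ℝ} (hp : DependsOn p (insert C.dec Obs))
    (hpn : ∀ a, ∑ d, p (update a C.dec d) = 1) {T : Finset V}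
    (hT : ∀ v ∈ T, ∀ u, C.E v u → u ∈ T) (hObs : ∀ w ∈ T, w ∈ Obs → w ∈ C.Pa)
    {h : (∀ v, val v) → ℝ} (hh : DependsOn h (↑T)ᶜ) :
    (∏ v ∈ T, (Fintype.card (val v) : ℝ)) * ∑ a, (∏ u, C.kernel P p u a) * h a =
      ∑ a, (∏ u ∈ Tᶜ, C.kernel P p u a) * h a := by
  refine C.prod_card_mul_sum_prod_mul (dependsOn_kernel P hp) (fun u w hw hwu => ?_) hT
    (fun v _ => sum_kernel_update P hpn v) hh
  unfold inputs at hwu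
  split_ifs at hwu with hu
  · exact hu ▸ hObs w hw hwu
  · exact hwu

theorem prod_card_mul_sum_prod_kernel_mul_of_not_desc (P : C.Param val) {Obs : Set V}
    {p : (∀ v, val v) → ℝ} (hp : DependsOn p (insert C.dec Obs))
    (hpn : ∀ a, ∑ d, p (update a C.dec d) = 1)
    (hObs : ∀ w ∈ Obs, ¬ Relation.ReflTransGen C.E C.dec w) {S : Finset V}
    (hS : ∀ u ∈ S, ¬ Relation.ReflTransGen C.E C.dec u) :
    (∏ v ∈ C.decDescendants, (Fintype.card (val v) : ℝ)) *
        ∑ a, (∏ u, C.kernel P p u a) * ∑ u ∈ S, P.uval u (a u) =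
      ∑ a, (∏ u ∈ C.decDescendantsᶜ, P.cpt u a) * ∑ u ∈ S, P.uval u (a u) := by
  rw [prod_card_mul_sum_prod_kernel_mul P hp hpn
    (fun v hv u hvu => mem_decDescendants.2 ((mem_decDescendants.1 hv).tail hvu))
    (fun w hw hwO => absurd (mem_decDescendants.1 hw) (hObs w hwO))
    ((dependsOn_sum_uval P S).mono fun u hu hu' => hS u hu (mem_decDescendants.1 hu'))]
  refine Finset.sum_congr rfl fun a _ => congr_arg (· * _) (Finset.prod_congr rfl fun u hu => ?_)
  refine congr_fun (kernel_of_ne P p ?_) a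
  rintro rfl
  exact Finset.mem_compl.1 hu (mem_decDescendants.2 .refl)

theorem exists_value_eq_mul_sum (P : C.Param val) (Obs : Set V) [∀ v, Nonempty (val v)] :
    ∃ c > 0, ∃ β : (∀ v, val v) → ℝ, DependsOn β (insert C.dec Obs) ∧
      ∀ p, DependsOn p (insert C.dec Obs) → C.value P p = c * ∑ a, p a * β a := by
  classical
  set W := (Finset.univ.filter (· ∉ insert C.dec Obs)).toList
  have hW : ∀ v, v ∈ W ↔ v ∉ insert C.dec Obs := by simp [W]
  set f : (∀ v, val v) → ℝ := fun a =>
    (∏ u ∈ Finset.univ.erase C.dec, P.cpt u a) * ∑ u ∈ C.util, P.uval u (a u)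
  have hpos : 0 < (W.map fun v => (Fintype.card (val v) : ℝ)).prod :=
    List.prod_pos fun _ hx => by
      obtain ⟨v, -, rfl⟩ := List.mem_map.1 hx
      exact_mod_cast Fintype.card_pos
  refine ⟨_, inv_pos.2 hpos, sumOutList W f,
    ((dependsOn_univ f).sumOutList W).mono fun v hv => by_contra fun h => hv.2 ((hW v).2 h),
    fun p hp => ?_⟩
  rw [sum_mul_sumOutList hp fun v hv => (hW v).1 hv, inv_mul_cancel_left₀ hpos.ne']
  exact Finset.sum_congr rfl fun a _ => by ring

theorem exists_pol_sum_mul_le [Nonempty (val C.dec)] {Obs : Set V} {F β : (∀ v, val v) → ℝ}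
    (hF : ∀ a, 0 ≤ F a) (hFD : DependsOn F {C.dec}ᶜ) (hβ : DependsOn β (insert C.dec Obs)) :
    ∃ q : C.Pol val Obs, ∀ p : (∀ v, val v) → ℝ, (∀ a, 0 ≤ p a) →
      (∀ a, ∑ d, p (update a C.dec d) = 1) →
      ∑ a, p a * (F a * β a) ≤ ∑ a, q.p a * (F a * β a) := by
  classical
  have hmax (g : val C.dec → ℝ) : ∃ d, ∀ d', g d' ≤ g d := by
    obtain ⟨d, -, hd⟩ := Finset.univ.exists_max_image g Finset.univ_nonempty
    exact ⟨d, fun d' => hd d' (Finset.mem_univ d')⟩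
  choose argmax hargmax using hmax
  set best : (∀ v, val v) → val C.dec := fun a => argmax fun d => β (update a C.dec d)
  have hbest_update (a : ∀ v, val v) (d : val C.dec) : best (update a C.dec d) = best a := by
    simp only [best, update_idem]
  have hq_update (a : ∀ v, val v) (d : val C.dec) :
      (if (update a C.dec d) C.dec = best (update a C.dec d) then (1 : ℝ) else 0) =
        if d = best a then 1 else 0 := by
    rw [update_self, hbest_update]
  refine ⟨⟨fun a => if a C.dec = best a then 1 else 0, fun a => by split_ifs <;> norm_num,
    fun a b hD hObs => ?_, fun a => by simp only [hq_update]; simp⟩, fun p hp hpn => ?_⟩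
  · have : best a = best b := congr_arg argmax <| funext fun d => hβ fun v hv => by
      by_cases hvD : v = C.dec
      · subst hvD; simp
      · simpa [update_of_ne hvD] using hObs v (hv.resolve_left hvD)
    simp only [hD, this]
  refine sum_le_sum_of_sumOut_le (v := C.dec) fun a => ?_
  simp only [sumOut, hFD.apply_update_of_notMem (Set.notMem_compl_iff.2 rfl), hq_update,
    ite_mul, one_mul, zero_mul, Finset.sum_ite_eq', Finset.mem_univ, if_true]
  calc ∑ d, p (update a C.dec d) * (F a * β (update a C.dec d))
      ≤ ∑ d, p (update a C.dec d) * (F a * β (update a C.dec (best a))) :=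
        Finset.sum_le_sum fun d _ => mul_le_mul_of_nonneg_left
          (mul_le_mul_of_nonneg_left (hargmax (fun d => β (update a C.dec d)) d) (hF a)) (hp _)
    _ = F a * β (update a C.dec (best a)) := by rw [← Finset.sum_mul, hpn, one_mul]

end Kernels

section Reduction

variable [Fintype V] [DecidableEq V] {C : CID V} {X : V} {val : V → Type}
  [∀ v, Fintype (val v)] (P : C.Param val)

section

variable (X)

noncomputable def nearFactor (a : ∀ v, val v) : ℝ := ∏ v ∈ nearFinset C X, P.cpt v a

noncomputable def farFactor (a : ∀ v, val v) : ℝ := ∏ v ∈ farFinset C X, P.cpt v a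

noncomputable def reducedUtil : (∀ v, val v) → ℝ :=
  sumOutList (hiddenFinset C X).toList fun a =>
    farFactor X P a * ∑ u ∈ C.descUtilFinset, P.uval u (a u)

end

theorem nearFactor_nonneg (a : ∀ v, val v) : 0 ≤ nearFactor X P a :=
  Finset.prod_nonneg fun v _ => P.cpt_nonneg v a

theorem dependsOn_nearFactor_compl_dec (hX : X ≠ C.dec)
    (hXdesc : ¬ Relation.TransGen C.E C.dec X)
    (hsep : ∀ u ∈ C.util, Relation.ReflTransGen C.E C.dec u →
      ¬ C.toDAG.DConn ({C.dec} ∪ (C.Pa \ {X})) X u) :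
    DependsOn (nearFactor X P) {C.dec}ᶜ := by
  refine .finset_prod fun u hu => ?_
  obtain ⟨huD, huA, hfam⟩ := mem_nearFinset.1 hu
  refine (P.dependsOn_cpt huD).mono ?_
  rintro v (rfl | hvu) rfl
  · exact huD rfl
  · exact dec_edge_notMem_moralComp hX hXdesc hsep hvu
      (mem_moralComp_of_family hX ⟨huA, notMem_sepSet_of_edge_dec huD hvu⟩ hfam)

theorem dependsOn_nearFactor_compl_hidden (hX : X ≠ C.dec) :
    DependsOn (nearFactor X P) (↑(hiddenFinset C X))ᶜ := by
  refine .finset_prod fun u hu => ?_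
  obtain ⟨huD, huA, hfam⟩ := mem_nearFinset.1 hu
  refine (P.dependsOn_cpt huD).mono fun v hvu hv => ?_
  obtain ⟨hvAZ, hvR⟩ := mem_hiddenFinset.1 hv
  exact hvR (mem_moralComp_of_mem_family hX huA hfam hvu hvAZ)

theorem dependsOn_reducedUtil (hX : X ≠ C.dec)
    (hsep : ∀ u ∈ C.util, Relation.ReflTransGen C.E C.dec u →
      ¬ C.toDAG.DConn ({C.dec} ∪ (C.Pa \ {X})) X u) :
    DependsOn (reducedUtil X P) (insert C.dec (C.Pa \ {X})) := by
  have hfar : DependsOn (farFactor X P) (C.ancestralSet X \ C.moralComp X) := by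
    refine .finset_prod fun u hu => ?_
    obtain ⟨huD, huA, hfam⟩ := mem_farFinset.1 hu
    refine (P.dependsOn_cpt huD).mono fun v hvu => ⟨?_, fun hvR => hfam ⟨v, hvu, hvR⟩⟩
    obtain rfl | hvu := hvu
    exacts [huA, mem_ancestralSet_of_edge huA hvu]
  have hutil : DependsOn (fun a => ∑ u ∈ C.descUtilFinset, P.uval u (a u))
      (C.ancestralSet X \ C.moralComp X) := by
    refine (dependsOn_sum_uval P _).mono fun u hu => ?_
    have hu := mem_descUtilFinset.1 hu
    exact ⟨⟨u, .inr (.inr hu), .refl⟩, descUtil_notMem_moralComp hX hsep hu⟩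
  refine ((hfar.mul hutil).sumOutList _).mono ?_
  rintro v ⟨⟨hvA, hvR⟩, hvh⟩
  by_contra hvZ
  exact hvh (Finset.mem_toList.2 (mem_hiddenFinset.2 ⟨⟨hvA, hvZ⟩, hvR⟩))

theorem obs_subset_compl_hiddenFinset (hX : X ≠ C.dec) :
    insert C.dec (C.Pa ∪ {X}) ⊆ (↑(hiddenFinset C X))ᶜ := by
  intro v hv hvh
  obtain ⟨⟨-, hvZ⟩, hvR⟩ := mem_hiddenFinset.1 hvh
  rcases hv with rfl | hvPa | rfl
  · exact hvZ (.inl rfl)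
  · by_cases hvX : v = X
    · exact hvR (hvX ▸ .refl)
    · exact hvZ (.inr ⟨hvPa, hvX⟩)
  · exact hvR .refl

theorem prod_kernel_ancestralFinset (p : (∀ v, val v) → ℝ) (a : ∀ v, val v) :
    ∏ u ∈ ancestralFinset C X, C.kernel P p u a = p a * (nearFactor X P a * farFactor X P a) := by
  have hD : C.dec ∈ ancestralFinset C X :=
    mem_ancestralFinset.2 ⟨C.dec, .inr (.inl (.inl rfl)), .refl⟩
  rw [← Finset.mul_prod_erase _ _ hD, nearFactor, farFactor, nearFinset, farFinset,
    Finset.prod_filter_mul_prod_filter_not]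
  simp only [kernel]
  congr 1
  exact Finset.prod_congr rfl fun u hu => by rw [if_neg (Finset.ne_of_mem_erase hu)]

theorem prod_card_mul_sum_prod_kernel_mul_descUtil (hX : X ≠ C.dec)
    {p : (∀ v, val v) → ℝ} (hp : DependsOn p (insert C.dec (C.Pa ∪ {X})))
    (hpn : ∀ a, ∑ d, p (update a C.dec d) = 1) :
    (∏ v ∈ (ancestralFinset C X)ᶜ, (Fintype.card (val v) : ℝ)) *
        ((∏ v ∈ hiddenFinset C X, (Fintype.card (val v) : ℝ)) *
          ∑ a, (∏ u, C.kernel P p u a) * ∑ u ∈ C.descUtilFinset, P.uval u (a u)) =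
      ∑ a, p a * (nearFactor X P a * reducedUtil X P a) := by
  have hrel : ∀ u ∈ C.descUtilFinset, u ∈ C.ancestralSet X := fun u hu =>
    ⟨u, .inr (.inr (mem_descUtilFinset.1 hu)), .refl⟩
  rw [mul_left_comm, prod_card_mul_sum_prod_kernel_mul P hp hpn (T := (ancestralFinset C X)ᶜ)
    (fun v hv u hvu => Finset.mem_compl.2 fun hu => Finset.mem_compl.1 hv
      (mem_ancestralFinset.2 (mem_ancestralSet_of_edge (mem_ancestralFinset.1 hu) hvu)))
    (fun w hw hwO => hwO.resolve_right fun hwX => Finset.mem_compl.1 hw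
      (mem_ancestralFinset.2 ⟨X, .inl rfl, by rw [Set.mem_singleton_iff.1 hwX]⟩))
    ((dependsOn_sum_uval P _).mono fun u hu => by simpa [mem_ancestralFinset] using hrel u hu),
    compl_compl]
  simp only [prod_kernel_ancestralFinset, reducedUtil]
  have hg := (hp.mono (obs_subset_compl_hiddenFinset hX)).mul
    (dependsOn_nearFactor_compl_hidden P hX)
  have key := sum_mul_sumOutList hg (l := (hiddenFinset C X).toList)
    (f := fun a => farFactor X P a * ∑ u ∈ C.descUtilFinset, P.uval u (a u))
    fun v hv => by simpa using hv
  rw [Finset.prod_map_toList] at key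
  simp only [← mul_assoc] at key ⊢
  rw [key]

theorem value_eq_mul_sum_reducedUtil_add (hX : X ≠ C.dec)
    (hXdesc : ¬ Relation.TransGen C.E C.dec X) {p : (∀ v, val v) → ℝ}
    (hp : DependsOn p (insert C.dec (C.Pa ∪ {X}))) (hpn : ∀ a, ∑ d, p (update a C.dec d) = 1)
    [∀ v, Nonempty (val v)] :
    C.value P p = ((∏ v ∈ (ancestralFinset C X)ᶜ, (Fintype.card (val v) : ℝ)) *
        ∏ v ∈ hiddenFinset C X, (Fintype.card (val v) : ℝ))⁻¹ *
          ∑ a, p a * (nearFactor X P a * reducedUtil X P a) +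
      (∏ v ∈ C.decDescendants, (Fintype.card (val v) : ℝ))⁻¹ *
        ∑ a, (∏ u ∈ C.decDescendantsᶜ, P.cpt u a) *
          ∑ u ∈ C.util \ C.descUtilFinset, P.uval u (a u) := by
  have hObs : ∀ w ∈ C.Pa ∪ {X}, ¬ Relation.ReflTransGen C.E C.dec w := by
    rintro w (hw | rfl) hDw
    · exact C.acyclic _ (.tail' hDw hw)
    · exact (Relation.reflTransGen_iff_eq_or_transGen.1 hDw).elim hX hXdesc
  have hsplit (a : ∀ v, val v) : ∑ u ∈ C.util, P.uval u (a u) =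
      ∑ u ∈ C.descUtilFinset, P.uval u (a u) + ∑ u ∈ C.util \ C.descUtilFinset, P.uval u (a u) :=
    ((Finset.sum_sdiff fun u hu => (mem_descUtilFinset.1 hu).1).symm.trans (add_comm _ _))
  simp only [value_eq_sum_prod_kernel, hsplit, mul_add, Finset.sum_add_distrib]
  rw [← prod_card_mul_sum_prod_kernel_mul_descUtil P hX hp hpn,
    ← prod_card_mul_sum_prod_kernel_mul_of_not_desc P hp hpn hObs fun u hu hDu =>
      (Finset.mem_sdiff.1 hu).2 (mem_descUtilFinset.2 ⟨(Finset.mem_sdiff.1 hu).1, hDu⟩),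
    ← mul_assoc (∏ v ∈ (ancestralFinset C X)ᶜ, _), inv_mul_cancel_left₀ (by positivity),
    inv_mul_cancel_left₀ (by positivity)]

theorem exists_value_reduction (hXdesc : ¬ Relation.TransGen C.E C.dec X)
    (hsep : ∀ u ∈ C.util, Relation.ReflTransGen C.E C.dec u →
      ¬ C.toDAG.DConn ({C.dec} ∪ (C.Pa \ {X})) X u) [∀ v, Nonempty (val v)] :
    ∃ c > 0, ∃ F β : (∀ v, val v) → ℝ, ∃ K : ℝ, (∀ a, 0 ≤ F a) ∧ DependsOn F {C.dec}ᶜ ∧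
      DependsOn β (insert C.dec (C.Pa \ {X})) ∧
      ∀ p, (∀ a, ∑ d, p (update a C.dec d) = 1) → DependsOn p (insert C.dec (C.Pa ∪ {X})) →
        C.value P p = c * ∑ a, p a * (F a * β a) + K := by
  by_cases hX : X = C.dec
  · obtain ⟨c, hc, β, hβ, hval⟩ := C.exists_value_eq_mul_sum P (C.Pa \ {X})
    refine ⟨c, hc, 1, β, 0, fun _ => zero_le_one, fun _ _ _ => rfl, hβ, fun p _ hp => ?_⟩
    simp only [Pi.one_apply, one_mul, add_zero]
    refine hval p (hp.mono ?_)
    rintro v (rfl | hv | rfl)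
    · exact .inl rfl
    · refine .inr ⟨hv, fun hvX => C.not_edge_self v ?_⟩
      rwa [Set.mem_singleton_iff.1 hvX, hX] at hv ⊢
    · exact .inl hX
  exact ⟨_, by positivity, nearFactor X P, reducedUtil X P, _, nearFactor_nonneg P,
    dependsOn_nearFactor_compl_dec P hX hXdesc hsep, dependsOn_reducedUtil P hX hsep,
    fun p hpn hp => value_eq_mul_sum_reducedUtil_add P hX hXdesc hp hpn⟩

end Reduction

end CID

/-- Observation incentive criterion, soundness direction: if a node `X` not descending
from the decision `D` is d-separated from every utility node descending from `D` by
`{D} ∪ Pa_D \ {X}`, then for every parameterization there is an optimal policy not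
depending on `X`: a policy depending only on `Pa_D \ {X}` whose value is at least that of
every policy depending on `Pa_D ∪ {X}`. Hence the optimal value with the information link
`X → D` equals the optimal value without it (no observation incentive for `X`). -/
theorem stmt4 {V : Type} [Fintype V] [DecidableEq V] (C : CID V) (X : V)
    (hXdesc : ¬ Relation.TransGen C.E C.dec X)
    (hsep : ∀ u ∈ C.util, Relation.ReflTransGen C.E C.dec u →
      ¬ C.toDAG.DConn ({C.dec} ∪ (C.Pa \ {X})) X u)
    (val : V → Type) [∀ v, Fintype (val v)] (P : C.Param val) :
    ∃ π : C.Pol val (C.Pa \ {X}),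
      ∀ π' : C.Pol val (C.Pa ∪ {X}), C.value P π'.p ≤ C.value P π.p := by
  rcases isEmpty_or_nonempty (∀ v, val v) with hΩ | hΩ
  · exact ⟨⟨0, fun _ => le_rfl, fun _ _ _ _ => rfl, isEmptyElim⟩, fun π' => by simp [CID.value]⟩
  have : ∀ v, Nonempty (val v) := fun v => ⟨hΩ.some v⟩
  obtain ⟨c, hc, F, β, K, hF, hFD, hβ, hval⟩ := C.exists_value_reduction P hXdesc hsep
  obtain ⟨q, hq⟩ := C.exists_pol_sum_mul_le hF hFD hβ
  refine ⟨q, fun π' => ?_⟩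
  rw [hval π'.p π'.sum π'.dependsOn, hval q.p q.sum (q.dependsOn.mono
    (Set.insert_subset_insert (Set.sdiff_subset.trans Set.subset_union_left)))]
  exact add_le_add_left (mul_le_mul_of_nonneg_left (hq π'.p π'.nonneg π'.sum) hc.le) K
end

section
/- In a single-decision CID graph, if there is no directed path from a non-decision node X to any utility node, then for every parameterization, no soft intervention on X can change the expected utility of any policy; hence there is no intervention incentive for X. -/
/-!
Let `s` be the set of descendants of `X`: it is closed under children and, by hypothesis, contains
no utility node. Write the value as a sum over all assignments of the product of one factor per
node (the policy at the decision). Summing out the nodes of `s` one at a time, always a node with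
no parent left in `s`, each summed factor contributes `1` while nothing else depends on that node,
so `∏ w ∈ s, |val w|` times the value is the same sum with only the factors outside `s` left.
The factor of `X` is not among them, so replacing it does not change the value.
-/

open Finset Function

theorem DependsOn.apply_update_of_notMem_s9 {ι : Type*} [DecidableEq ι] {α : ι → Type*} {β : Type*}
    {f : (∀ i, α i) → β} {s : Set ι} (hf : DependsOn f s) {i : ι} (hi : i ∉ s)
    (x : ∀ i, α i) (y : α i) : f (Function.update x i y) = f x :=
  hf fun _ hj => update_of_ne (by rintro rfl; exact hi hj) _ _

section Marginalization

variable {V : Type} [Fintype V] [DecidableEq V] {val : V → Type} [∀ v, Fintype (val v)]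

theorem sum_sum_update_eq_card_smul {M : Type*} [AddCommMonoid M] (w : V)
    (F : (∀ v, val v) → M) :
    ∑ x : val w, ∑ a : ∀ v, val v, F (update a w x) = Fintype.card (val w) • ∑ a, F a := by
  have hinv : Involutive fun p : (∀ v, val v) × val w => (update p.1 w p.2, p.1 w) := by
    rintro ⟨a, x⟩
    simp
  have h := Fintype.sum_bijective _ hinv.bijective (fun p => F (update p.1 w p.2))
    (fun p => F p.1) fun _ => rfl
  rw [Fintype.sum_prod_type, Finset.sum_comm, Fintype.sum_prod_type] at h
  simp [h, Finset.card_univ, Finset.smul_sum]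

theorem card_mul_sum_mul_eq_sum_s9 {R : Type*} [Semiring R] (w : V) {K h : (∀ v, val v) → R}
    (hK : DependsOn K {w}ᶜ) (hh : ∀ a, ∑ x, h (update a w x) = 1) :
    (Fintype.card (val w) : R) * ∑ a, K a * h a = ∑ a, K a := by
  have hKw : ∀ a x, K (update a w x) = K a := fun a x =>
    hK.apply_update_of_notMem_s9 (Set.notMem_compl_iff.2 rfl) a x
  rw [← nsmul_eq_mul, ← sum_sum_update_eq_card_smul, Finset.sum_comm]
  simp_rw [hKw, ← Finset.mul_sum, hh, mul_one]

end Marginalization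

namespace DAG

variable {V : Type} (G : DAG V)

def IsChildClosed (s : Finset V) : Prop :=
  ∀ w ∈ s, ∀ v, G.E w v → v ∈ s

theorem exists_mem_forall_not_E [Finite V] {s : Finset V} (hs : s.Nonempty) :
    ∃ w ∈ s, ∀ v ∈ s, ¬ G.E v w := by
  have : IsTrans V (Relation.TransGen G.E) := ⟨fun _ _ _ => Relation.TransGen.trans⟩
  have : Std.Irrefl (Relation.TransGen G.E) := ⟨G.acyclic⟩
  obtain ⟨w, hw, hmin⟩ :=
    (Finite.wellFounded_of_trans_of_irrefl (Relation.TransGen G.E)).has_min (s : Set V) hs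
  exact ⟨w, hw, fun v hv hvw => hmin v hv (.single hvw)⟩

variable [DecidableEq V]

theorem IsChildClosed.erase {G : DAG V} {s : Finset V} (hs : G.IsChildClosed s) {w : V}
    (hw : ∀ v ∈ s, ¬ G.E v w) : G.IsChildClosed (s.erase w) := by
  intro u hu v huv
  refine mem_erase.2 ⟨?_, hs u (mem_of_mem_erase hu) v huv⟩
  rintro rfl
  exact hw u (mem_of_mem_erase hu) huv

variable [Fintype V] {val : V → Type} [∀ v, Fintype (val v)]

theorem prod_card_mul_sum_prod_mul_s9 {R : Type*} [CommSemiring R] {f : V → (∀ v, val v) → R}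
    {U : (∀ v, val v) → R} {s : Finset V} (hs : G.IsChildClosed s)
    (hf : ∀ v, DependsOn (f v) (insert v {u | G.E u v}))
    (hnorm : ∀ v ∈ s, ∀ a, ∑ x, f v (update a v x) = 1) (hU : DependsOn U (↑s)ᶜ) :
    (∏ w ∈ s, (Fintype.card (val w) : R)) * ∑ a, (∏ v, f v a) * U a =
      ∑ a, (∏ v ∈ sᶜ, f v a) * U a := by
  induction s using Finset.strongInduction with
  | H s ih =>
  rcases s.eq_empty_or_nonempty with rfl | hne
  · simp
  obtain ⟨w, hw, hroot⟩ := G.exists_mem_forall_not_E hne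
  have hcompl : (s.erase w)ᶜ = insert w sᶜ := by
    ext v
    by_cases hv : v = w <;> simp [hv, hw]
  have hK : DependsOn (fun a => (∏ v ∈ sᶜ, f v a) * U a) {w}ᶜ := by
    intro a b hab
    dsimp only
    have hvw : ∀ v ∈ sᶜ, ∀ u ∈ insert v {u | G.E u v}, u ≠ w := by
      rintro v hv u (rfl | huv) rfl
      · exact mem_compl.1 hv hw
      · exact mem_compl.1 hv (hs _ hw v huv)
    congr 1
    · exact prod_congr rfl fun v hv => hf v fun u hu => hab u (hvw v hv u hu)
    · exact hU fun u hu => hab u fun huw => hu (huw ▸ hw)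
  calc (∏ w ∈ s, (Fintype.card (val w) : R)) * ∑ a, (∏ v, f v a) * U a
      = Fintype.card (val w) *
          ((∏ w ∈ s.erase w, (Fintype.card (val w) : R)) * ∑ a, (∏ v, f v a) * U a) := by
        rw [← mul_prod_erase s _ hw, mul_assoc]
    _ = Fintype.card (val w) * ∑ a, ((∏ v ∈ sᶜ, f v a) * U a) * f w a := by
        rw [ih _ (erase_ssubset hw) (hs.erase hroot)
          (fun v hv => hnorm v (mem_of_mem_erase hv))
          (hU.mono (Set.compl_subset_compl.2 (coe_subset.2 (erase_subset w s))))]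
        refine congrArg _ (sum_congr rfl fun a _ => ?_)
        rw [hcompl, prod_insert (notMem_compl.2 hw)]
        ring
    _ = ∑ a, (∏ v ∈ sᶜ, f v a) * U a := card_mul_sum_mul_eq_sum_s9 w hK (hnorm w hw)

theorem sum_prod_mul_congr {K : Type*} [Field K] [CharZero K] {f g : V → (∀ v, val v) → K}
    {U : (∀ v, val v) → K} {s : Finset V} (hs : G.IsChildClosed s)
    (hf : ∀ v, DependsOn (f v) (insert v {u | G.E u v}))
    (hg : ∀ v, DependsOn (g v) (insert v {u | G.E u v}))
    (hfn : ∀ v ∈ s, ∀ a, ∑ x, f v (update a v x) = 1)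
    (hgn : ∀ v ∈ s, ∀ a, ∑ x, g v (update a v x) = 1)
    (hU : DependsOn U (↑s)ᶜ) (hfg : ∀ v ∉ s, f v = g v) :
    ∑ a, (∏ v, f v a) * U a = ∑ a, (∏ v, g v a) * U a := by
  rcases isEmpty_or_nonempty (∀ v, val v) with hempty | ⟨⟨a₀⟩⟩
  · simp only [Fintype.sum_empty]
  have hcard : (∏ w ∈ s, (Fintype.card (val w) : K)) ≠ 0 :=
    prod_ne_zero_iff.2 fun w _ => Nat.cast_ne_zero.2 (Fintype.card_pos_iff.2 ⟨a₀ w⟩).ne'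
  refine mul_left_cancel₀ hcard ?_
  rw [G.prod_card_mul_sum_prod_mul_s9 hs hf hfn hU, G.prod_card_mul_sum_prod_mul_s9 hs hg hgn hU]
  exact sum_congr rfl fun a _ => by
    rw [prod_congr rfl fun v hv => congrFun (hfg v (mem_compl.1 hv)) a]

end DAG

namespace CID

variable {V : Type} [Fintype V] [DecidableEq V] {val : V → Type} [∀ v, Fintype (val v)]
  {C : CID V}

theorem value_eq_sum_prod_update (P : C.Param val) (p : (∀ v, val v) → ℝ) :
    C.value P p = ∑ a, (∏ v, update P.cpt C.dec p v a) * ∑ u ∈ C.util, P.uval u (a u) := by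
  refine sum_congr rfl fun a _ => ?_
  rw [← mul_prod_erase univ (fun v => update P.cpt C.dec p v a) (mem_univ C.dec), update_self]
  congr 2
  exact prod_congr rfl fun v hv => congrFun (update_of_ne (ne_of_mem_erase hv) p P.cpt).symm a

theorem Param.dependsOn_update_cpt (P : C.Param val) (π : C.Pol val C.Pa) (v : V) :
    DependsOn (update P.cpt C.dec π.p v) (insert v {u | C.E u v}) := by
  intro a b hab
  rcases eq_or_ne v C.dec with rfl | hv
  · rw [update_self]
    exact π.depends a b (hab _ (Set.mem_insert _ _)) fun u hu => hab u (Set.mem_insert_of_mem _ hu)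
  · rw [update_of_ne hv]
    exact P.cpt_local v hv a b (hab _ (Set.mem_insert _ _))
      fun u hu => hab u (Set.mem_insert_of_mem _ hu)

theorem Param.sum_update_cpt_update (P : C.Param val) (π : C.Pol val C.Pa) (v : V)
    (a : ∀ v, val v) : ∑ x, update P.cpt C.dec π.p v (update a v x) = 1 := by
  rcases eq_or_ne v C.dec with rfl | hv
  · simpa only [update_self] using π.sum a
  · simpa only [update_of_ne hv] using P.cpt_sum v hv a

end CID

theorem stmt9_general {V : Type} [Fintype V] [DecidableEq V] (C : CID V) (X : V)
    (hnopath : ¬ ∃ u ∈ C.util, Relation.ReflTransGen C.E X u)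
    (val : V → Type) [∀ v, Fintype (val v)] (P P' : C.Param val)
    (hagree : ∀ v, v ≠ X → P.cpt v = P'.cpt v) (huval : P.uval = P'.uval) :
    ∀ π : C.Pol val C.Pa, C.value P π.p = C.value P' π.p := by
  classical
  intro π
  set s : Finset V := univ.filter (Relation.ReflTransGen C.E X)
  have hs : C.IsChildClosed s := fun w hw v hwv =>
    mem_filter.2 ⟨mem_univ v, (mem_filter.1 hw).2.tail hwv⟩
  have hU : DependsOn (fun a : ∀ v, val v => ∑ u ∈ C.util, P.uval u (a u)) (↑s)ᶜ :=
    fun a b hab => sum_congr rfl fun u hu => congrArg _ <| hab u fun hus =>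
      hnopath ⟨u, hu, (mem_filter.1 hus).2⟩
  rw [CID.value_eq_sum_prod_update, CID.value_eq_sum_prod_update, ← huval]
  refine C.sum_prod_mul_congr hs (P.dependsOn_update_cpt π) (P'.dependsOn_update_cpt π)
    (fun v _ => P.sum_update_cpt_update π v) (fun v _ => P'.sum_update_cpt_update π v) hU
    fun v hv => ?_
  rcases eq_or_ne v C.dec with rfl | hvd
  · rw [update_self, update_self]
  · have hvX : v ≠ X := by
      rintro rfl
      exact hv (mem_filter.2 ⟨mem_univ _, .refl⟩)
    rw [update_of_ne hvd, update_of_ne hvd, hagree v hvX]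

/-- If there is no directed path from a non-decision node `X` to any utility node, then
for every parameterization, no soft intervention on `X` (replacing the conditional
distribution of `X` only, i.e. passing to a parameterization `P'` agreeing with `P`
everywhere except possibly at `X`) can change the expected utility of any policy;
hence there is no intervention incentive for `X`. -/
theorem stmt9 {V : Type} [Fintype V] [DecidableEq V] (C : CID V) (X : V)
    (hX : X ≠ C.dec)
    (hnopath : ¬ ∃ u ∈ C.util, Relation.ReflTransGen C.E X u)
    (val : V → Type) [∀ v, Fintype (val v)] (P P' : C.Param val)
    (hagree : ∀ v, v ≠ X → P.cpt v = P'.cpt v) (huval : P.uval = P'.uval) :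
    ∀ π : C.Pol val C.Pa, C.value P π.p = C.value P' π.p :=
  stmt9_general C X hnopath val P P' hagree huval
end

section
/- In a single-decision CID graph, if a non-decision node X has a directed path to a utility node that does not pass through the decision D, then there exists a parameterization and a soft intervention on X such that the maximal expected utility under the intervention strictly exceeds the maximal expected utility without it. -/
/-!
Make every node Boolean and let the utility be the indicator that the last node `u` of the
path is `true`. On the path, `X` is set deterministically to a bit `b` and every other node
is the OR of its parents on the path; all remaining nodes are uniform. With `b = false`,
well-founded induction along the acyclic edge relation shows that every configuration of
positive probability is `false` on the whole path, so no policy earns anything. With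
`b = true`, the all-`true` configuration has positive probability and utility `1`, so even
the uniform policy earns a positive amount. The path avoids `D`, so every node on it has a
genuine conditional distribution that no policy can override.
-/

theorem List.IsChain.exists_mem_rel_of_mem {α : Type*} {R : α → α → Prop} :
    ∀ {x : α} {l : List α}, (x :: l).IsChain R → ∀ y ∈ l, ∃ z ∈ x :: l, R z y
  | _, [], _, _, hy => absurd hy List.not_mem_nil
  | x, z :: l, h, y, hy => by
    rw [List.isChain_cons_cons] at h
    rcases List.mem_cons.mp hy with rfl | hy
    · exact ⟨x, List.mem_cons_self, h.1⟩
    · obtain ⟨w, hw, hwy⟩ := exists_mem_rel_of_mem h.2 y hy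
      exact ⟨w, List.mem_cons_of_mem _ hw, hwy⟩

theorem DirPathAvoiding.exists_path {V : Type} {E : V → V → Prop} {x u d : V}
    (h : DirPathAvoiding E x u d) :
    ∃ L : List V, u ∈ L ∧ d ∉ L ∧ ∀ v ∈ L, v ≠ x → ∃ w ∈ L, E w v := by
  obtain ⟨L, hne, hhead, hlast, hchain, hd⟩ := h
  obtain ⟨y, T, rfl⟩ := List.exists_cons_of_ne_nil hne
  obtain rfl : y = x := by simpa using hhead
  refine ⟨_ :: T, List.mem_of_getLast? hlast, hd, fun v hv hvx => ?_⟩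
  exact hchain.exists_mem_rel_of_mem v ((List.mem_cons.mp hv).resolve_left hvx)

theorem DAG.wellFounded {V : Type} [Finite V] (G : DAG V) : WellFounded G.E :=
  have : IsTrans V (Relation.TransGen G.E) := ⟨fun _ _ _ => Relation.TransGen.trans⟩
  have : Std.Irrefl (Relation.TransGen G.E) := ⟨G.acyclic⟩
  Subrelation.wf Relation.TransGen.single (Finite.wellFounded_of_trans_of_irrefl _)

namespace CID

section Policies

variable {V : Type} [Fintype V] [DecidableEq V] {C : CID V}

theorem Pol.p_le_one {val : V → Type} [∀ v, Fintype (val v)] {Obs : Set V}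
    (π : C.Pol val Obs) (a : ∀ v, val v) : π.p a ≤ 1 := by
  calc π.p a = π.p (Function.update a C.dec (a C.dec)) := by rw [Function.update_eq_self]
    _ ≤ ∑ d, π.p (Function.update a C.dec d) :=
        Finset.single_le_sum (fun _ _ => π.nonneg _) (Finset.mem_univ _)
    _ = 1 := π.sum a

noncomputable def Pol.uniform (C : CID V) {val : V → Type} [∀ v, Fintype (val v)]
    [Nonempty (val C.dec)] (Obs : Set V) : C.Pol val Obs where
  p _ := (Fintype.card (val C.dec) : ℝ)⁻¹
  nonneg _ := by positivity
  depends _ _ _ _ := rfl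
  sum _ := by simp

theorem bddAbove_range_value {val : V → Type} [∀ v, Fintype (val v)] (P : C.Param val)
    (Obs : Set V) : BddAbove (Set.range fun π : C.Pol val Obs => C.value P π.p) := by
  refine ⟨∑ a : ∀ v, val v,
    (∏ v ∈ Finset.univ.erase C.dec, P.cpt v a) * |∑ u ∈ C.util, P.uval u (a u)|, ?_⟩
  rintro _ ⟨π, rfl⟩
  refine Finset.sum_le_sum fun a _ => ?_
  set c := ∏ v ∈ Finset.univ.erase C.dec, P.cpt v a
  set U := ∑ u ∈ C.util, P.uval u (a u)
  have hc : 0 ≤ c := Finset.prod_nonneg fun v _ => P.cpt_nonneg v a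
  calc π.p a * c * U ≤ π.p a * c * |U| :=
        mul_le_mul_of_nonneg_left (le_abs_self U) (mul_nonneg (π.nonneg a) hc)
    _ = π.p a * (c * |U|) := mul_assoc _ _ _
    _ ≤ c * |U| := mul_le_of_le_one_left (mul_nonneg hc (abs_nonneg U)) (π.p_le_one a)

end Policies

variable {V : Type} {C : CID V}

open Classical in
noncomputable def relay (C : CID V) (S : Set V) (X : V) (b : Bool) (a : V → Bool) (v : V) :
    Bool :=
  if v = X then b else decide (∃ w ∈ S, C.E w v ∧ a w = true)

open Classical in
noncomputable def relayCpt (C : CID V) (S : Set V) (X : V) (b : Bool) (v : V) (a : V → Bool) :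
    ℝ :=
  if v ∈ S then (if a v = C.relay S X b a v then 1 else 0) else 1 / 2

theorem relay_congr (S : Set V) (X : V) (b : Bool) {a c : V → Bool} {v : V}
    (h : ∀ w, C.E w v → a w = c w) : C.relay S X b a v = C.relay S X b c v := by
  unfold relay
  congr 2
  exact propext <| exists_congr fun w => and_congr_right fun _ =>
    and_congr_right fun hw => by rw [h w hw]

theorem relay_update_self [DecidableEq V] (S : Set V) (X : V) (b : Bool) (a : V → Bool) (v : V)
    (x : Bool) : C.relay S X b (Function.update a v x) v = C.relay S X b a v :=
  relay_congr S X b fun w hw =>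
    Function.update_of_ne (fun h => C.acyclic v (.single (by rwa [h] at hw))) _ _

theorem eq_false_of_relayCpt_false_ne_zero [Finite V] {S : Set V} {X : V} {a : V → Bool}
    (ha : ∀ v ∈ S, C.relayCpt S X false v a ≠ 0) : ∀ v ∈ S, a v = false := by
  intro v
  induction v using C.wellFounded.induction with
  | _ v ih =>
    intro hv
    have hrelay : a v = C.relay S X false a v := by
      by_contra h
      exact ha v hv (by simp [relayCpt, hv, h])
    rw [hrelay, relay]
    split_ifs
    · rfl
    · simpa using fun w hw hwv => ih w hwv hw

theorem relayCpt_true_pos {S : Set V} {X : V} (hpar : ∀ v ∈ S, v ≠ X → ∃ w ∈ S, C.E w v)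
    (v : V) : 0 < C.relayCpt S X true v (fun _ => true) := by
  by_cases hvS : v ∈ S
  · have : C.relay S X true (fun _ => true) v = true := by
      by_cases hvX : v = X
      · simp [relay, hvX]
      · simpa [relay, hvX] using hpar v hvS hvX
    simp [relayCpt, hvS, this]
  · simp [relayCpt, hvS]

variable [Fintype V] [DecidableEq V]

noncomputable def relayParam (C : CID V) (S : Set V) (X : V) (b : Bool) (u : V) :
    C.Param (fun _ => Bool) where
  cpt := C.relayCpt S X b
  cpt_nonneg v a := by unfold relayCpt; split_ifs <;> norm_num
  cpt_local v _ a c hv hpar := by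
    simp only [relayCpt, hv, relay_congr S X b hpar]
  cpt_sum v _ a := by
    unfold relayCpt
    split_ifs
    · simp only [relay_update_self, Function.update_self, Fintype.sum_bool]
      cases C.relay S X b a v <;> norm_num
    · norm_num
  uval v y := if v = u ∧ y = true then 1 else 0

theorem sum_util_relayParam_uval {u : V} (hu : u ∈ C.util) (S : Set V) (X : V) (b : Bool)
    (a : V → Bool) :
    ∑ v ∈ C.util, (C.relayParam S X b u).uval v (a v) = if a u = true then 1 else 0 := by
  rw [Finset.sum_eq_single_of_mem u hu fun v _ hv => by simp [relayParam, hv]]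
  simp [relayParam]

theorem value_relayParam_false {S : Set V} {X u : V} (hu : u ∈ C.util) (huS : u ∈ S)
    (hdS : C.dec ∉ S) (p : (V → Bool) → ℝ) :
    C.value (C.relayParam S X false u) p = 0 := by
  refine Finset.sum_eq_zero fun a _ => ?_
  rw [sum_util_relayParam_uval hu]
  by_cases hau : a u = true
  · have hzero : ∃ v ∈ S, C.relayCpt S X false v a = 0 := by
      by_contra! h
      rw [eq_false_of_relayCpt_false_ne_zero h u huS] at hau
      exact Bool.false_ne_true hau
    obtain ⟨v, hvS, hv⟩ := hzero
    have hvd : v ≠ C.dec := fun h => hdS (h ▸ hvS)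
    rw [Finset.prod_eq_zero (Finset.mem_erase.mpr ⟨hvd, Finset.mem_univ v⟩) hv]
    ring
  · simp [hau]

theorem value_relayParam_true_pos {S : Set V} {X u : V} (hu : u ∈ C.util)
    (hpar : ∀ v ∈ S, v ≠ X → ∃ w ∈ S, C.E w v) (Obs : Set V) :
    0 < C.value (C.relayParam S X true u) (Pol.uniform C Obs).p := by
  have hterm : ∀ a : V → Bool, 0 ≤ ((Pol.uniform C Obs).p a *
      ∏ v ∈ Finset.univ.erase C.dec, C.relayCpt S X true v a) * (if a u = true then 1 else 0) :=
    fun a => mul_nonneg (mul_nonneg ((Pol.uniform C Obs).nonneg a)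
      (Finset.prod_nonneg fun v _ => (C.relayParam S X true u).cpt_nonneg v a)) (by positivity)
  unfold value
  simp only [sum_util_relayParam_uval hu]
  refine Finset.sum_pos' (fun a _ => hterm a) ⟨fun _ => true, Finset.mem_univ _, ?_⟩
  have hprod := Finset.prod_pos fun v (_ : v ∈ Finset.univ.erase C.dec) =>
    relayCpt_true_pos hpar v
  simp only [if_true, mul_one]
  exact mul_pos (by simp [Pol.uniform]) hprod

end CID

theorem stmt10_general {V : Type} [Fintype V] [DecidableEq V] (C : CID V) (X : V)
    (hpath : ∃ u ∈ C.util, DirPathAvoiding C.E X u C.dec) :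
    ∃ (val : V → Type) (inst : ∀ v, Fintype (val v)),
      letI := inst
      ∃ P P' : C.Param val,
        (∀ v, v ≠ X → P.cpt v = P'.cpt v) ∧ P.uval = P'.uval ∧
        (⨆ π : C.Pol val C.Pa, C.value P π.p) < ⨆ π : C.Pol val C.Pa, C.value P' π.p := by
  obtain ⟨u, hu, hpath⟩ := hpath
  obtain ⟨L, huL, hdL, hpar⟩ := hpath.exists_path
  let S : Set V := {v | v ∈ L}
  refine ⟨fun _ => Bool, fun _ => inferInstance, C.relayParam S X false u,
    C.relayParam S X true u, fun v hv => ?_, rfl, ?_⟩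
  · funext a
    simp [CID.relayParam, CID.relayCpt, CID.relay, hv]
  · calc (⨆ π : C.Pol (fun _ => Bool) C.Pa, C.value (C.relayParam S X false u) π.p)
        = 0 := by simp [CID.value_relayParam_false (S := S) hu huL hdL]
      _ < C.value (C.relayParam S X true u) (CID.Pol.uniform C C.Pa).p :=
        CID.value_relayParam_true_pos hu hpar C.Pa
      _ ≤ _ := le_ciSup (CID.bddAbove_range_value _ _) _

/-- Intervention incentive, direct-control direction: if a non-decision node `X` has a
directed path to a utility node that does not pass through the decision `D`, then there
is a parameterization `P` and a soft intervention on `X` (a parameterization `P'`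
agreeing with `P` everywhere except at `X`) such that the maximal expected utility under
the intervention strictly exceeds the maximal expected utility without it. -/
theorem stmt10 {V : Type} [Fintype V] [DecidableEq V] (C : CID V) (X : V)
    (hX : X ≠ C.dec)
    (hpath : ∃ u ∈ C.util, DirPathAvoiding C.E X u C.dec) :
    ∃ (val : V → Type) (inst : ∀ v, Fintype (val v)),
      letI := inst
      ∃ P P' : C.Param val,
        (∀ v, v ≠ X → P.cpt v = P'.cpt v) ∧ P.uval = P'.uval ∧
        (⨆ π : C.Pol val C.Pa, C.value P π.p) < ⨆ π : C.Pol val C.Pa, C.value P' π.p :=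
  stmt10_general C X hpath
end

section
/- In a single-decision CID graph, the requisite observations and nonrequisite observations partition Pa_D, and a node X with a directed path to a utility node in the reduced graph G* either has a directed path to a utility node avoiding D (direct intervention incentive), or every such directed path passes through D; in the latter case X is an ancestor of some requisite observation of D. -/
namespace DirPathAvoiding

variable {V : Type} {E : V → V → Prop} {x y u d : V}

theorem refl (hx : x ≠ d) : DirPathAvoiding E x x d :=
  ⟨[x], List.cons_ne_nil x [], rfl, rfl, List.isChain_singleton x,
    by simpa using fun h => hx h.symm⟩

theorem head (hxy : E x y) (hx : x ≠ d) (h : DirPathAvoiding E y u d) :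
    DirPathAvoiding E x u d := by
  obtain ⟨_ | ⟨a, t⟩, hne, hhead, hlast, hchain, hd⟩ := h
  · exact absurd rfl hne
  obtain rfl : a = y := Option.some_inj.mp hhead
  refine ⟨x :: a :: t, List.cons_ne_nil x _, rfl, ?_, List.isChain_cons_cons.2 ⟨hxy, hchain⟩, ?_⟩
  · rwa [List.getLast?_cons_cons]
  · exact fun hmem => (List.mem_cons.1 hmem).elim (fun h => hx h.symm) hd

end DirPathAvoiding

/-- Cut a walk at its first visit to `d`: the part before it avoids `d` and ends in a
predecessor of `d`. -/
theorem Relation.ReflTransGen.dirPathAvoiding_or_reaches_pred {V : Type} {E : V → V → Prop}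
    {x u d : V} (h : Relation.ReflTransGen E x u) (hx : x ≠ d) :
    DirPathAvoiding E x u d ∨ ∃ y, E y d ∧ Relation.ReflTransGen E x y := by
  induction h using Relation.ReflTransGen.head_induction_on with
  | refl => exact Or.inl (DirPathAvoiding.refl hx)
  | @head x y hxy _ ih =>
    by_cases hy : y = d
    · exact Or.inr ⟨x, hy ▸ hxy, Relation.ReflTransGen.refl⟩
    · rcases ih hy with hpath | ⟨z, hzd, hyz⟩
      · exact Or.inl (hpath.head hxy hx)
      · exact Or.inr ⟨z, hzd, Relation.ReflTransGen.head hxy hyz⟩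

namespace CID

variable {V : Type} (C : CID V)

theorem pa_eq_requisite_union_nonrequisite :
    C.Pa = {O | C.Requisite O} ∪ {O | C.Nonrequisite O} := by
  ext O
  by_cases hO : C.Requisite O
  · simp [hO, hO.1]
  · simp [Nonrequisite, hO]

theorem requisite_inter_nonrequisite :
    {O | C.Requisite O} ∩ {O | C.Nonrequisite O} = ∅ :=
  Set.eq_empty_of_forall_notMem fun _ ⟨hreq, hnon⟩ => hnon.2 hreq

end CID

/-- The requisite and nonrequisite observations partition `Pa_D`; and a non-decision node
`X` with a directed path to a utility node in the reduced graph `G*` either has a directed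
path to a utility node avoiding `D` (direct intervention incentive), or every such path
passes through `D`, in which case `X` is an ancestor of some requisite observation of `D`. -/
theorem stmt11 {V : Type} (C : CID V) :
    (C.Pa = {O | C.Requisite O} ∪ {O | C.Nonrequisite O} ∧
      {O | C.Requisite O} ∩ {O | C.Nonrequisite O} = ∅) ∧
    (∀ X : V, X ≠ C.dec → (∃ u ∈ C.util, Relation.ReflTransGen C.Ered X u) →
      (∃ u ∈ C.util, DirPathAvoiding C.Ered X u C.dec) ∨
      ((¬ ∃ u ∈ C.util, DirPathAvoiding C.Ered X u C.dec) ∧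
        ∃ O, C.Requisite O ∧ Relation.ReflTransGen C.Ered X O)) := by
  refine ⟨⟨C.pa_eq_requisite_union_nonrequisite, C.requisite_inter_nonrequisite⟩, ?_⟩
  rintro X hX ⟨u, hu, hXu⟩
  by_cases hdirect : ∃ u ∈ C.util, DirPathAvoiding C.Ered X u C.dec
  · exact Or.inl hdirect
  refine Or.inr ⟨hdirect, ?_⟩
  rcases hXu.dirPathAvoiding_or_reaches_pred hX with hpath | ⟨O, hO, hXO⟩
  · exact absurd ⟨u, hu, hpath⟩ hdirect
  -- `G*` keeps an edge into `D` only from a requisite observation.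
  · exact ⟨O, hO.2 rfl, hXO⟩
end

section
/- If X is a requisite observation of the decision D in a single-decision CID graph (i.e., X ∈ Pa_D and X is d-connected to a utility node descending from D given {D} ∪ Pa_D \ {X}), then there exists a 'supporting pair of paths': a directed path from D to some utility node U, and an undirected path from X to the same U not passing through D that is active when conditioning on {D} ∪ Pa_D \ {X}. -/
/-!
A d-connecting path from `X` given `Z = {D} ∪ Pa_D \ {X}` can never pass through `D`.
`D` is neither its start (`X → D`) nor its end (a utility node). At an interior visit,
`D ∈ Z` forces a collider `a → D ← b`, so the next node `b` is a parent of `D` other than `X`,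
hence `b ∈ Z`. If `b` ends the path then `b` is a utility node descending from `D`, closing
the cycle `D →* b → D`; otherwise `b` is a non-collider (`D → b` would close a 2-cycle)
lying in `Z`, which blocks the path.
-/

namespace List

variable {α : Type*}

theorem exists_eq_append_cons_cons_cons_of_mem {l : List α} {x : α} (hx : x ∈ l)
    (hhead : l.head? ≠ some x) (hlast : l.getLast? ≠ some x) :
    ∃ s a b r, l = s ++ a :: x :: b :: r := by
  obtain ⟨s, t, rfl⟩ := append_of_mem hx
  obtain rfl | ⟨s, a, rfl⟩ := eq_nil_or_concat s
  · simp at hhead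
  obtain _ | ⟨b, r⟩ := t
  · simp at hlast
  exact ⟨s, a, b, r, by simp⟩

end List

namespace DAG

variable {V : Type} (G : DAG V) {Z : Set V}

theorem not_reflTransGen_of_edge {u v : V} (huv : G.E u v) : ¬ Relation.ReflTransGen G.E v u :=
  fun hvu => G.acyclic u (.head' huv hvu)

theorem edge_asymm {u v : V} (huv : G.E u v) : ¬ G.E v u :=
  fun hvu => G.not_reflTransGen_of_edge huv (.single hvu)

variable {G}

theorem ActiveTriple.edges_of_mem {a b c : V} (h : G.ActiveTriple Z a b c) (hb : b ∈ Z) :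
    G.E a b ∧ G.E c b := by
  rcases h with ⟨hab, hcb, _⟩ | ⟨_, hbZ⟩
  · exact ⟨hab, hcb⟩
  · exact absurd hb hbZ

theorem ActiveTriple.not_mem_of_edge {a b c : V} (h : G.ActiveTriple Z a b c) (hba : G.E b a) :
    b ∉ Z :=
  fun hb => G.edge_asymm hba (h.edges_of_mem hb).1

theorem ActivePath.of_cons {x : V} {p : List V} (h : G.ActivePath Z (x :: p)) :
    G.ActivePath Z p := by
  match p, h with
  | [], _ | [_], _ => trivial
  | _ :: _ :: _, h => exact h.2

theorem ActivePath.of_append {s p : List V} (h : G.ActivePath Z (s ++ p)) :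
    G.ActivePath Z p := by
  induction s with
  | nil => exact h
  | cons _ s ih => exact ih h.of_cons

end DAG

namespace CID

variable {V : Type} (C : CID V)

theorem dec_not_mem_of_activePath {X u : V} {p : List V} (hX : X ∈ C.Pa) (hu : u ∈ C.util)
    (hdu : Relation.ReflTransGen C.E C.dec u) (hnd : p.Nodup) (hhead : p.head? = some X)
    (hlast : p.getLast? = some u) (hact : C.toDAG.ActivePath ({C.dec} ∪ (C.Pa \ {X})) p) :
    C.dec ∉ p := by
  intro hD
  have hXD : X ≠ C.dec := fun h => C.not_reflTransGen_of_edge (h ▸ hX : C.E X X) .refl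
  have huD : u ≠ C.dec := fun h => C.dec_not_util (h ▸ hu)
  obtain ⟨s, a, b, r, rfl⟩ := List.exists_eq_append_cons_cons_cons_of_mem hD
    (by rw [hhead]; simpa using hXD) (by rw [hlast]; simpa using huD)
  have hsuffix := hact.of_append
  have hbD : C.E b C.dec := (hsuffix.1.edges_of_mem (by simp)).2
  have hbX : b ≠ X := by
    rintro rfl
    rw [List.append_cons] at hnd hhead
    have hbs : b ∈ s ++ [a] := List.mem_of_mem_head? (by simpa using hhead)
    exact (List.nodup_append.1 hnd).2.2 b hbs b (by simp) rfl
  have hbZ : b ∈ ({C.dec} ∪ (C.Pa \ {X}) : Set V) := Or.inr ⟨hbD, hbX⟩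
  obtain _ | ⟨c, r⟩ := r
  · have hbu : b = u := by simpa using hlast
    exact C.not_reflTransGen_of_edge hbD (hbu ▸ hdu)
  · exact hsuffix.2.1.not_mem_of_edge hbD hbZ

end CID

/-- Existence of a supporting pair of paths: if `X` is a requisite observation of the
decision `D` (i.e. `X ∈ Pa_D` and `X` is d-connected to a utility node descending from
`D` given `{D} ∪ Pa_D \ {X}`), then there is a utility node `U` with a directed
(frontdoor) path from `D` to `U` and an undirected (backdoor) path from `X` to the same
`U` that does not pass through `D` and is active when conditioning on
`{D} ∪ Pa_D \ {X}`. -/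
theorem stmt12 {V : Type} (C : CID V) (X : V) (hreq : C.Requisite X) :
    ∃ u ∈ C.util, Relation.ReflTransGen C.E C.dec u ∧
      ∃ p : List V, p.Nodup ∧ C.toDAG.IsUPath p ∧ p.head? = some X ∧
        p.getLast? = some u ∧ C.dec ∉ p ∧
        C.toDAG.ActivePath ({C.dec} ∪ (C.Pa \ {X})) p := by
  obtain ⟨hX, u, hu, hdu, p, hnd, hup, hhead, hlast, hact⟩ := hreq
  exact ⟨u, hu, hdu, p, hnd, hup, hhead, hlast,
    C.dec_not_mem_of_activePath hX hu hdu hnd hhead hlast hact, hact⟩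
end

section
/- In a Bayesian network, changing the conditional probability distribution of a node X (a soft intervention) leaves the joint marginal distribution over any set of nodes W unchanged whenever X is not an ancestor of any node in W. -/
/-- A Bayesian network over the DAG `G`: finite domains `val v` and conditional
probability tables for each node, depending only on the node's own value and its parents. -/
structure BN (V : Type) [Fintype V] [DecidableEq V] (G : DAG V)
    (val : V → Type) [∀ v, Fintype (val v)] where
  cpt : ∀ _v : V, (∀ u : V, val u) → ℝ
  cpt_nonneg : ∀ v a, 0 ≤ cpt v a
  cpt_local : ∀ v a b, a v = b v → (∀ u, G.E u v → a u = b u) → cpt v a = cpt v b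
  cpt_sum : ∀ (v : V) (a : ∀ u : V, val u), ∑ x : val v, cpt v (Function.update a v x) = 1

namespace BN

variable {V : Type} [Fintype V] [DecidableEq V] {G : DAG V} {val : V → Type}
  [∀ v, Fintype (val v)]

/-- The joint probability of a full assignment: the product of the conditionals. -/
noncomputable def joint (B : BN V G val) (a : ∀ v, val v) : ℝ :=
  ∏ v, B.cpt v a

open Classical in
/-- The probability of an event (a predicate on full assignments). -/
noncomputable def pr (B : BN V G val) (φ : (∀ v, val v) → Prop) : ℝ :=
  ∑ a : ∀ v, val v, if φ a then B.joint a else 0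

end BN

open Finset Function

theorem Fintype.sum_eq_sum_of_sum_update_eq {ι : Type*} [Fintype ι] [DecidableEq ι]
    {β : ι → Type*} [∀ i, Fintype (β i)] {M : Type*} [AddCommMonoid M] (i : ι)
    {F F' : (∀ j, β j) → M} (h : ∀ a, ∑ x, F (update a i x) = ∑ x, F' (update a i x)) :
    ∑ a, F a = ∑ a, F' a := by
  rcases isEmpty_or_nonempty (β i) with hi | ⟨⟨y⟩⟩
  · have : IsEmpty (∀ j, β j) := ⟨fun a => isEmptyElim (a i)⟩
    simp
  set e := Equiv.piSplitAt i β
  have hsplit : ∀ x r, e.symm (x, r) = update (e.symm (y, r)) i x := by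
    intro x r
    funext j
    by_cases hj : j = i
    · subst hj; simp [e]
    · simp [e, hj]
  rw [← e.symm.sum_comp F, ← e.symm.sum_comp F', Fintype.sum_prod_type_right,
    Fintype.sum_prod_type_right]
  refine Fintype.sum_congr _ _ fun r => ?_
  simpa only [← hsplit] using h (e.symm (y, r))

theorem DAG.exists_forall_not_transGen {V : Type} [Finite V] (G : DAG V) {S : Set V}
    (hS : S.Nonempty) : ∃ v ∈ S, ∀ u ∈ S, ¬ Relation.TransGen G.E u v :=
  have : Std.Irrefl (Relation.TransGen G.E) := ⟨G.acyclic⟩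
  (Finite.wellFounded_of_trans_of_irrefl _).has_min S hS

namespace BN

variable {V : Type} [Fintype V] [DecidableEq V] {G : DAG V} {val : V → Type}
  [∀ v, Fintype (val v)]

theorem pr_congr {B B' : BN V G val} (h : B.cpt = B'.cpt) (φ : (∀ v, val v) → Prop) :
    B.pr φ = B'.pr φ := by
  simp only [pr, joint, h]

theorem sum_joint_update_of_sink (B : BN V G val) {v : V}
    (hsink : ∀ u, u ≠ v → ∀ a x, B.cpt u (update a v x) = B.cpt u a) (a : ∀ u, val u) :
    ∑ x, B.joint (update a v x) = ∏ u ∈ univ.erase v, B.cpt u a := by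
  have hsplit : ∀ x, B.joint (update a v x)
      = (∏ u ∈ univ.erase v, B.cpt u a) * B.cpt v (update a v x) := fun x => by
    rw [joint, ← prod_erase_mul _ _ (mem_univ v)]
    congr 1
    exact prod_congr rfl fun u hu => hsink u (ne_of_mem_erase hu) a x
  simp only [hsplit, ← mul_sum, B.cpt_sum, mul_one]

theorem pr_eq_of_cpt_eq_off_sink {B B' : BN V G val} {v : V}
    (hagree : ∀ u, u ≠ v → B.cpt u = B'.cpt u)
    (hsink : ∀ u, u ≠ v → ∀ a x, B.cpt u (update a v x) = B.cpt u a)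
    {φ : (∀ u, val u) → Prop} (hφ : ∀ a x, φ (update a v x) ↔ φ a) :
    B.pr φ = B'.pr φ := by
  have hsink' : ∀ u, u ≠ v → ∀ a x, B'.cpt u (update a v x) = B'.cpt u a := fun u hu => by
    rw [← hagree u hu]
    exact hsink u hu
  unfold pr
  refine Fintype.sum_eq_sum_of_sum_update_eq v fun a => ?_
  classical
  by_cases ha : φ a
  · simp only [hφ, ha, if_true, B.sum_joint_update_of_sink hsink,
      B'.sum_joint_update_of_sink hsink']
    exact prod_congr rfl fun u hu => congrFun (hagree u (ne_of_mem_erase hu)) a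
  · simp only [hφ, ha, if_false]

open Classical in
noncomputable def intervene (B : BN V G val) (S : Finset V) (z : ∀ v, val v) : BN V G val where
  cpt v a := if v ∈ S then (if a v = z v then 1 else 0) else B.cpt v a
  cpt_nonneg v a := by
    split_ifs
    exacts [zero_le_one, le_rfl, B.cpt_nonneg v a]
  cpt_local v a b hv hpa := by
    by_cases h : v ∈ S
    · simp [h, hv]
    · simpa [h] using B.cpt_local v a b hv hpa
  cpt_sum v a := by
    by_cases h : v ∈ S
    · simp [h]
    · simpa [h] using B.cpt_sum v a

theorem intervene_cpt_eq {B B' : BN V G val} {S : Finset V} (z : ∀ v, val v)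
    (hagree : ∀ v ∉ S, B.cpt v = B'.cpt v) : (B.intervene S z).cpt = (B'.intervene S z).cpt := by
  funext v
  by_cases h : v ∈ S
  · simp [intervene, h]
  · simp [intervene, h, hagree v h]

theorem pr_intervene (B : BN V G val) (z : ∀ v, val v) {S : Finset V}
    (hclosed : ∀ v ∈ S, ∀ u, G.E v u → u ∈ S) {φ : (∀ v, val v) → Prop}
    (hφ : ∀ v ∈ S, ∀ a x, φ (update a v x) ↔ φ a) : (B.intervene S z).pr φ = B.pr φ := by
  induction S using Finset.strongInduction with | H S ih => ?_
  rcases S.eq_empty_or_nonempty with rfl | hne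
  · exact pr_congr (funext fun v => by simp [intervene]) φ
  obtain ⟨v, hvS, hmin⟩ := G.exists_forall_not_transGen (coe_nonempty.mpr hne)
  have hclosed' : ∀ u ∈ S.erase v, ∀ w, G.E u w → w ∈ S.erase v := by
    intro u hu w huw
    refine mem_erase.mpr ⟨?_, hclosed u (mem_of_mem_erase hu) w huw⟩
    rintro rfl
    exact hmin u (mem_of_mem_erase hu) (.single huw)
  rw [← ih _ (erase_ssubset hvS) hclosed' fun u hu => hφ u (mem_of_mem_erase hu)]
  -- `v` has no ancestor in `S`, so its children lie in `S.erase v` and ignore their parents.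
  refine (pr_eq_of_cpt_eq_off_sink (v := v) (fun u hu => ?_) (fun u hu a x => ?_) (hφ v hvS)).symm
  · simp [intervene, hu]
  · by_cases hu' : u ∈ S.erase v
    · simp only [intervene, hu', if_true]
      rw [update_of_ne hu]
    · simp only [intervene, hu', if_false]
      refine B.cpt_local u _ _ (update_of_ne hu _ _) fun w hwu => update_of_ne ?_ _ _
      rintro rfl
      exact hu' (mem_erase.mpr ⟨hu, hclosed w hvS u hwu⟩)

end BN

/-- Changing the conditional probability distribution of a node `X` of a Bayesian network
(a soft intervention, here: passing to a second network `B'` over the same DAG agreeing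
with `B` at every node other than `X`) leaves the joint marginal distribution over any
set of nodes `W` unchanged whenever `X` is not an ancestor (inclusive) of any node in `W`. -/
theorem stmt15 {V : Type} [Fintype V] [DecidableEq V] {G : DAG V} {val : V → Type}
    [∀ v, Fintype (val v)] (B B' : BN V G val) (X : V)
    (hagree : ∀ v, v ≠ X → B.cpt v = B'.cpt v)
    (W : Set V) (hW : ∀ w ∈ W, ¬ Relation.ReflTransGen G.E X w)
    (z : ∀ v, val v) :
    B.pr (fun a => ∀ w ∈ W, a w = z w) = B'.pr (fun a => ∀ w ∈ W, a w = z w) := by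
  classical
  set D : Finset V := univ.filter (Relation.ReflTransGen G.E X)
  have hD : ∀ v, v ∈ D ↔ Relation.ReflTransGen G.E X v := by simp [D]
  have hclosed : ∀ v ∈ D, ∀ u, G.E v u → u ∈ D := fun v hv u hvu =>
    (hD u).mpr (((hD v).mp hv).tail hvu)
  have hφ : ∀ v ∈ D, ∀ (a : ∀ u, val u) x,
      (∀ w ∈ W, update a v x w = z w) ↔ ∀ w ∈ W, a w = z w := fun v hv a x =>
    forall₂_congr fun w hw => by
      rw [update_of_ne]
      rintro rfl
      exact hW w hw ((hD w).mp hv)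
  rw [← B.pr_intervene z hclosed hφ, ← B'.pr_intervene z hclosed hφ]
  refine BN.pr_congr (BN.intervene_cpt_eq z fun v hv => hagree v ?_) _
  rintro rfl
  exact hv ((hD v).mpr .refl)
end
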